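/- arXiv:2605.15402 — 10 statements merged into one kernel-verified Lean document; each statement's English description precedes it below -/
import Mathlib

section
/- Let C be a symmetric monoidal category and X an object with a copoint w : X → 1 and all equalisers of symmetries on X^{⊗n}. Let f : Z → X^ω be a morphism into the limit of the delete chain that equalises all finitely supported symmetries on X^ω. Then for every n, π_{≤n} ∘ f : Z → X^{⊗n} equalises all symmetries on X^{⊗n}, and moreover the induced factorisations (π_{≤n} ∘ f)^† : Z → M_n X form a cone over the draw-and-delete chain. -/
open CategoryTheory MonoidalCategory

universe u v

namespace CategoryTheory

variable {C : Type u} [Category.{v} C]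

theorem comp_comp_eq_of_intertwines {Z A B : C} {f : Z ⟶ A} {s : A ⟶ A} {p : A ⟶ B}
    {t : B ⟶ B} (hsp : s ≫ p = p ≫ t) (hf : f ≫ s = f) : (f ≫ p) ≫ t = f ≫ p := by
  rw [Category.assoc, ← hsp, ← Category.assoc, hf]

theorem comp_eq_of_existsUnique_factor {Z M M' P P' : C} {e : M ⟶ P} {e' : M' ⟶ P'}
    {k : M' ⟶ M} {d : P' ⟶ P} (hk : k ≫ e = e' ≫ d) {q : Z ⟶ P} {q' : Z ⟶ P'}
    (hq : q' ≫ d = q) (huniq : ∃! h : Z ⟶ M, h ≫ e = q) {g : Z ⟶ M} {g' : Z ⟶ M'}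
    (hg : g ≫ e = q) (hg' : g' ≫ e' = q') : g' ≫ k = g :=
  huniq.unique (by rw [Category.assoc, hk, ← Category.assoc, hg', hq]) hg

end CategoryTheory

theorem stmt_2_general {C : Type u} [Category.{v} C]
    (pow : ℕ → C) (sym : ∀ n, Equiv.Perm (Fin n) → (pow n ⟶ pow n))
    (d : ∀ n, pow (n + 1) ⟶ pow n)
    (Xω : C) (π : ∀ n, Xω ⟶ pow n) (hπ : ∀ n, π (n + 1) ≫ d n = π n)
    (M : ℕ → C) (eqn : ∀ n, M n ⟶ pow n)
    (huniv : ∀ n (Z : C) (g : Z ⟶ pow n), (∀ σ, g ≫ sym n σ = g) →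
      ∃! h : Z ⟶ M n, h ≫ eqn n = g)
    (DD : ∀ n, M (n + 1) ⟶ M n)
    (hDD : ∀ n, DD n ≫ eqn n = eqn (n + 1) ≫ d n)
    (finSym : ∀ n, Equiv.Perm (Fin n) → (Xω ⟶ Xω))
    (hfinSym : ∀ n σ, finSym n σ ≫ π n = π n ≫ sym n σ)
    (Z : C) (f : Z ⟶ Xω) (hf : ∀ n σ, f ≫ finSym n σ = f) :
    (∀ n σ, (f ≫ π n) ≫ sym n σ = f ≫ π n) ∧
    ∃ g : ∀ n, Z ⟶ M n,
      (∀ n, g n ≫ eqn n = f ≫ π n) ∧ ∀ n, g (n + 1) ≫ DD n = g n := by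
  have hsym : ∀ n σ, (f ≫ π n) ≫ sym n σ = f ≫ π n := fun n σ =>
    comp_comp_eq_of_intertwines (hfinSym n σ) (hf n σ)
  choose g hg _ using fun n => huniv n Z (f ≫ π n) (hsym n)
  refine ⟨hsym, g, hg, fun n => ?_⟩
  exact comp_eq_of_existsUnique_factor (hDD n) (by rw [Category.assoc, hπ])
    (huniv n Z _ (hsym n)) (hg n) (hg (n + 1))

/-- Let `(X, w)` be a `1`-copointed object of a symmetric monoidal category, with tensor
powers `pow n = X^{⊗n}`, symmetries `sym n σ`, discard morphisms `d n = X^{⊗n} ⊗ w`,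
limit `(Xω, π)` of the delete chain, equalisers of symmetries `(M n, eq n)`,
draw-and-delete morphisms `DD n` (with `eq n ∘ DD n = d n ∘ eq (n+1)`), and finitely
supported symmetries `σ̇ = finSym n σ : Xω ⟶ Xω` (with `π n ∘ σ̇ = sym n σ ∘ π n`).
If `f : Z ⟶ Xω` equalises all finitely supported symmetries, then each `π n ∘ f`
equalises all symmetries on `X^{⊗n}`, and the induced factorisations
`(π n ∘ f)† : Z ⟶ M n` form a cone over the draw-and-delete chain. -/
theorem stmt_2 {C : Type u} [Category.{v} C] [MonoidalCategory C] [SymmetricCategory C]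
    (X : C) (w : X ⟶ 𝟙_ C)
    (pow : ℕ → C) (sym : ∀ n, Equiv.Perm (Fin n) → (pow n ⟶ pow n))
    (d : ∀ n, pow (n + 1) ⟶ pow n)
    (Xω : C) (π : ∀ n, Xω ⟶ pow n) (hπ : ∀ n, π (n + 1) ≫ d n = π n)
    (M : ℕ → C) (eqn : ∀ n, M n ⟶ pow n)
    (heq : ∀ n σ, eqn n ≫ sym n σ = eqn n)
    (huniv : ∀ n (Z : C) (g : Z ⟶ pow n), (∀ σ, g ≫ sym n σ = g) →
      ∃! h : Z ⟶ M n, h ≫ eqn n = g)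
    (DD : ∀ n, M (n + 1) ⟶ M n)
    (hDD : ∀ n, DD n ≫ eqn n = eqn (n + 1) ≫ d n)
    (finSym : ∀ n, Equiv.Perm (Fin n) → (Xω ⟶ Xω))
    (hfinSym : ∀ n σ, finSym n σ ≫ π n = π n ≫ sym n σ)
    (Z : C) (f : Z ⟶ Xω) (hf : ∀ n σ, f ≫ finSym n σ = f) :
    (∀ n σ, (f ≫ π n) ≫ sym n σ = f ≫ π n) ∧
    ∃ g : ∀ n, Z ⟶ M n,
      (∀ n, g n ≫ eqn n = f ≫ π n) ∧ ∀ n, g (n + 1) ≫ DD n = g n :=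
  stmt_2_general pow sym d Xω π hπ M eqn huniv DD hDD finSym hfinSym Z f hf
end

section
/- Let C be a symmetric monoidal category, X an object with copoint w : X → 1, such that the limit X^ω of the delete chain exists and equalisers of symmetries M_n X exist. Given a cone (f_n : Z → M_n X)_{n∈ℕ} over the draw-and-delete chain, the induced morphism f^ω : Z → X^ω (obtained from the cone (eq_n ∘ f_n : Z → X^{⊗n}) on the delete chain) equalises all finitely supported symmetries on X^ω. -/
open CategoryTheory MonoidalCategory

universe u v

theorem stmt_3_general {C : Type u} [Category.{v} C]
    (pow : ℕ → C) (sym : ∀ n, Equiv.Perm (Fin n) → (pow n ⟶ pow n))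
    (d : ∀ n, pow (n + 1) ⟶ pow n)
    (Xω : C) (π : ∀ n, Xω ⟶ pow n)
    (hπlim : ∀ (Z : C) (c : ∀ n, Z ⟶ pow n), (∀ n, c (n + 1) ≫ d n = c n) →
      ∃! u : Z ⟶ Xω, ∀ n, u ≫ π n = c n)
    (hπjoint : ∀ (Z : C) (u v : Z ⟶ Xω) (N : ℕ),
      (∀ m, N ≤ m → u ≫ π m = v ≫ π m) → u = v)
    (M : ℕ → C) (eqn : ∀ n, M n ⟶ pow n)
    (heq : ∀ n σ, eqn n ≫ sym n σ = eqn n)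
    (DD : ∀ n, M (n + 1) ⟶ M n)
    (hDD : ∀ n, DD n ≫ eqn n = eqn (n + 1) ≫ d n)
    (finSym : ∀ n, Equiv.Perm (Fin n) → (Xω ⟶ Xω))
    (hfinSym : ∀ (n : ℕ) (σ : Equiv.Perm (Fin n)) (m : ℕ), n ≤ m →
      ∃ τ : Equiv.Perm (Fin m), finSym n σ ≫ π m = π m ≫ sym m τ)
    (Z : C) (f : ∀ n, Z ⟶ M n) (hf : ∀ n, f (n + 1) ≫ DD n = f n) :
    ∃ fω : Z ⟶ Xω, (∀ n, fω ≫ π n = f n ≫ eqn n) ∧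
      ∀ n σ, fω ≫ finSym n σ = fω := by
  have hcone : ∀ n, (f (n + 1) ≫ eqn (n + 1)) ≫ d n = f n ≫ eqn n := fun n => by
    rw [Category.assoc, ← hDD, ← Category.assoc, hf]
  obtain ⟨fω, hfω, -⟩ := hπlim Z (fun n => f n ≫ eqn n) hcone
  refine ⟨fω, hfω, fun n σ => hπjoint Z _ _ n fun m hm => ?_⟩
  -- at each level `m ≥ n`, `finSym n σ` acts as a symmetry, which `eqn m` absorbs
  obtain ⟨τ, hτ⟩ := hfinSym n σ m hm
  calc (fω ≫ finSym n σ) ≫ π m = (fω ≫ π m) ≫ sym m τ := by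
        rw [Category.assoc, hτ, Category.assoc]
    _ = f m ≫ eqn m := by rw [hfω, Category.assoc, heq]
    _ = fω ≫ π m := (hfω m).symm

/-- Same setting as before: `(X,w)` a `1`-copointed object with tensor powers `pow n`,
symmetries `sym n σ`, discard morphisms `d n`, limit `(Xω, π)` of the delete chain (also
a limit of every truncated delete chain, whence the joint-monicity hypothesis),
equalisers of symmetries `(M n, eqn n)`, draw-and-delete morphisms `DD n`, and finitely
supported symmetries `finSym n σ` determined layerwise by lifted permutations.
Given a cone `(f n : Z ⟶ M n)` over the draw-and-delete chain, the induced morphism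
`f^ω : Z ⟶ Xω` (factorising the cone `(eqn n ∘ f n)` over the delete chain) equalises
all finitely supported symmetries on `Xω`. -/
theorem stmt_3 {C : Type u} [Category.{v} C] [MonoidalCategory C] [SymmetricCategory C]
    (X : C) (w : X ⟶ 𝟙_ C)
    (pow : ℕ → C) (sym : ∀ n, Equiv.Perm (Fin n) → (pow n ⟶ pow n))
    (d : ∀ n, pow (n + 1) ⟶ pow n)
    (Xω : C) (π : ∀ n, Xω ⟶ pow n) (hπ : ∀ n, π (n + 1) ≫ d n = π n)
    (hπlim : ∀ (Z : C) (c : ∀ n, Z ⟶ pow n), (∀ n, c (n + 1) ≫ d n = c n) →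
      ∃! u : Z ⟶ Xω, ∀ n, u ≫ π n = c n)
    (hπjoint : ∀ (Z : C) (u v : Z ⟶ Xω) (N : ℕ),
      (∀ m, N ≤ m → u ≫ π m = v ≫ π m) → u = v)
    (M : ℕ → C) (eqn : ∀ n, M n ⟶ pow n)
    (heq : ∀ n σ, eqn n ≫ sym n σ = eqn n)
    (DD : ∀ n, M (n + 1) ⟶ M n)
    (hDD : ∀ n, DD n ≫ eqn n = eqn (n + 1) ≫ d n)
    (finSym : ∀ n, Equiv.Perm (Fin n) → (Xω ⟶ Xω))
    (hfinSym : ∀ (n : ℕ) (σ : Equiv.Perm (Fin n)) (m : ℕ), n ≤ m →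
      ∃ τ : Equiv.Perm (Fin m), finSym n σ ≫ π m = π m ≫ sym m τ)
    (Z : C) (f : ∀ n, Z ⟶ M n) (hf : ∀ n, f (n + 1) ≫ DD n = f n) :
    ∃ fω : Z ⟶ Xω, (∀ n, fω ≫ π n = f n ≫ eqn n) ∧
      ∀ n σ, fω ≫ finSym n σ = fω :=
  stmt_3_general pow sym d Xω π hπlim hπjoint M eqn heq DD hDD finSym hfinSym Z f hf
end

section
/- In a symmetric monoidal category, for a 1-copointed object (X, w) such that the draw-and-delete chain over (X,w) can be built and the delete chain has a limit X^ω, the draw-and-delete chain has a limit if and only if the equaliser of all finitely supported symmetries on X^ω exists, and in that case the two limits are isomorphic. -/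
open CategoryTheory MonoidalCategory

universe u v

/-!
Both universal properties say that an object represents a presheaf on `C`: the limit of the
draw-and-delete chain represents `towerCones DD`, the compatible families into the chain
`DD n : M (n + 1) ⟶ M n`, and the equaliser represents `invariantHoms`, the maps into `Xω` fixed
by all finitely supported symmetries. These presheaves are naturally isomorphic. A compatible
family `c` gives the cone `c n ≫ eqn n` over the delete chain, and the induced map into `Xω` is
invariant because a finitely supported symmetry acts on every late enough stage `π m` by a
symmetry of `X^{⊗m}`, which `eqn m` equalises. Conversely, the components `h ≫ π n` of an
invariant map are symmetric, so they factor through the equalisers `eqn n`. Representing objects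
of isomorphic presheaves are isomorphic.
-/

namespace CategoryTheory

open Opposite

variable {C : Type u} [Category.{v} C]

namespace Functor.IsRepresentedBy

variable {F : Cᵒᵖ ⥤ Type v} {L : C} {x : F.obj (op L)} (hx : F.IsRepresentedBy x)

noncomputable def lift {Z : C} (y : F.obj (op Z)) : Z ⟶ L :=
  hx.representableBy.homEquiv.symm y

lemma map_lift {Z : C} (y : F.obj (op Z)) : F.map (hx.lift y).op x = y :=
  hx.representableBy.homEquiv.apply_symm_apply y

lemma hom_ext (hx : F.IsRepresentedBy x) {Z : C} {u u' : Z ⟶ L}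
    (h : F.map u.op x = F.map u'.op x) : u = u' :=
  hx.map_bijective.1 h

lemma comp_lift {Z Z' : C} (f : Z' ⟶ Z) (y : F.obj (op Z)) :
    f ≫ hx.lift y = hx.lift (F.map f.op y) :=
  hx.representableBy.comp_homEquiv_symm y f

end Functor.IsRepresentedBy

lemma Functor.isRepresentedBy_iff_existsUnique {F : Cᵒᵖ ⥤ Type*} {L : C} (x : F.obj (op L)) :
    F.IsRepresentedBy x ↔ ∀ (Z : C) (y : F.obj (op Z)), ∃! u : Z ⟶ L, F.map u.op x = y := by
  simp only [Functor.isRepresentedBy_iff, Function.bijective_iff_existsUnique]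

def towerCones {P : ℕ → C} (d : ∀ n, P (n + 1) ⟶ P n) : Cᵒᵖ ⥤ Type v where
  obj Z := {c : ∀ n, Z.unop ⟶ P n // ∀ n, c (n + 1) ≫ d n = c n}
  map f := ↾fun c => ⟨fun n => f.unop ≫ c.1 n, fun n => by simp [c.2]⟩

def invariantHoms {A : C} {ι : Type*} (f : ι → (A ⟶ A)) : Cᵒᵖ ⥤ Type v where
  obj Z := {h : Z.unop ⟶ A // ∀ i, h ≫ f i = h}
  map g := ↾fun h => ⟨g.unop ≫ h.1, fun i => by simp [h.2]⟩

lemma towerCones_map_op_eq_iff {P : ℕ → C} {d : ∀ n, P (n + 1) ⟶ P n} {Z L : C} (u : Z ⟶ L)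
    (π : (towerCones d).obj (op L)) (c : (towerCones d).obj (op Z)) :
    (towerCones d).map u.op π = c ↔ ∀ n, u ≫ π.1 n = c.1 n :=
  Subtype.ext_iff.trans funext_iff

lemma invariantHoms_map_op_eq_iff {A : C} {ι : Type*} {f : ι → (A ⟶ A)} {Z L : C} (u : Z ⟶ L)
    (e : (invariantHoms f).obj (op L)) (h : (invariantHoms f).obj (op Z)) :
    (invariantHoms f).map u.op e = h ↔ u ≫ e.1 = h.1 :=
  Subtype.ext_iff

lemma towerCones_isRepresentedBy_iff {P : ℕ → C} (d : ∀ n, P (n + 1) ⟶ P n) {L : C}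
    (π : (towerCones d).obj (op L)) :
    (towerCones d).IsRepresentedBy π ↔ ∀ (Z : C) (c : ∀ n, Z ⟶ P n),
      (∀ n, c (n + 1) ≫ d n = c n) → ∃! u : Z ⟶ L, ∀ n, u ≫ π.1 n = c n := by
  rw [Functor.isRepresentedBy_iff_existsUnique]
  refine forall_congr' fun Z => ⟨fun h c hc => ?_, fun h c => ?_⟩
  · exact (existsUnique_congr fun u => towerCones_map_op_eq_iff u π ⟨c, hc⟩).1 (h ⟨c, hc⟩)
  · exact (existsUnique_congr fun u => towerCones_map_op_eq_iff u π c).2 (h c.1 c.2)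

lemma invariantHoms_isRepresentedBy_iff {A : C} {ι : Type*} (f : ι → (A ⟶ A)) {L : C}
    (e : (invariantHoms f).obj (op L)) :
    (invariantHoms f).IsRepresentedBy e ↔ ∀ (Z : C) (h : Z ⟶ A),
      (∀ i, h ≫ f i = h) → ∃! u : Z ⟶ L, u ≫ e.1 = h := by
  rw [Functor.isRepresentedBy_iff_existsUnique]
  refine forall_congr' fun Z => ⟨fun H h hh => ?_, fun H h => ?_⟩
  · exact (existsUnique_congr fun u => invariantHoms_map_op_eq_iff u e ⟨h, hh⟩).1 (H ⟨h, hh⟩)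
  · exact (existsUnique_congr fun u => invariantHoms_map_op_eq_iff u e h).2 (H h.1 h.2)

lemma towerCones_lift_comp {P : ℕ → C} {d : ∀ n, P (n + 1) ⟶ P n} {L : C}
    {π : (towerCones d).obj (op L)} (hπ : (towerCones d).IsRepresentedBy π) {Z : C}
    (c : (towerCones d).obj (op Z)) (n : ℕ) : hπ.lift c ≫ π.1 n = c.1 n :=
  (towerCones_map_op_eq_iff _ π c).1 (hπ.map_lift c) n

lemma invariantHoms_lift_comp {A : C} {ι : Type*} {f : ι → (A ⟶ A)} {L : C}
    {e : (invariantHoms f).obj (op L)} (he : (invariantHoms f).IsRepresentedBy e) {Z : C}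
    (h : (invariantHoms f).obj (op Z)) : he.lift h ≫ e.1 = h.1 :=
  (invariantHoms_map_op_eq_iff _ e h).1 (he.map_lift h)

lemma towerCones_hom_ext_of_eventually {P : ℕ → C} {d : ∀ n, P (n + 1) ⟶ P n} {L : C}
    {π : (towerCones d).obj (op L)} (hπ : (towerCones d).IsRepresentedBy π) {Z : C}
    {u u' : Z ⟶ L} (N : ℕ) (h : ∀ m, N ≤ m → u ≫ π.1 m = u' ≫ π.1 m) : u = u' := by
  have key : ∀ k m, N ≤ m + k → u ≫ π.1 m = u' ≫ π.1 m := by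
    intro k
    induction k with
    | zero => exact h
    | succ k ih =>
      intro m hm
      rw [← π.2 m, ← Category.assoc, ← Category.assoc, ih (m + 1) (by omega)]
  exact hπ.hom_ext ((towerCones_map_op_eq_iff u π _).2 fun m => key N m (by omega))

def towerConesMap {P M : ℕ → C} {d : ∀ n, P (n + 1) ⟶ P n} {DD : ∀ n, M (n + 1) ⟶ M n}
    (f : ∀ n, M n ⟶ P n) (hf : ∀ n, DD n ≫ f n = f (n + 1) ≫ d n) :
    towerCones DD ⟶ towerCones d where
  app Z := ↾fun c => ⟨fun n => c.1 n ≫ f n, fun n => by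
    rw [Category.assoc, ← hf, ← Category.assoc, c.2]⟩
  naturality _ _ _ := by
    ext c
    exact Subtype.ext (funext fun _ => Category.assoc _ _ _)

section

variable {P : ℕ → C} {d : ∀ n, P (n + 1) ⟶ P n} {L : C} {π : (towerCones d).obj (op L)}
  {ι : ℕ → Type*} {sym : ∀ n, ι n → (P n ⟶ P n)} {finSym : ∀ n, ι n → (L ⟶ L)}

lemma comp_finSym_eq_self (hπ : (towerCones d).IsRepresentedBy π)
    (hfinSymLift : ∀ n i m, n ≤ m → ∃ j, finSym n i ≫ π.1 m = π.1 m ≫ sym m j)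
    {Z : C} {h : Z ⟶ L} (hh : ∀ n i, (h ≫ π.1 n) ≫ sym n i = h ≫ π.1 n) (n : ℕ) (i : ι n) :
    h ≫ finSym n i = h := by
  refine towerCones_hom_ext_of_eventually hπ n fun m hm => ?_
  obtain ⟨j, hj⟩ := hfinSymLift n i m hm
  rw [Category.assoc, hj, ← Category.assoc, hh]

variable {M : ℕ → C} {eqn : ∀ n, (invariantHoms (sym n)).obj (op (M n))}
  {DD : ∀ n, M (n + 1) ⟶ M n} (hπ : (towerCones d).IsRepresentedBy π)
  (hDD : ∀ n, DD n ≫ (eqn n).1 = (eqn (n + 1)).1 ≫ d n)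
  (hfinSymLift : ∀ n i m, n ≤ m → ∃ j, finSym n i ≫ π.1 m = π.1 m ≫ sym m j)

noncomputable def towerConesToInvariantHoms :
    towerCones DD ⟶ invariantHoms (Sigma.uncurry finSym) where
  app Z := ↾fun c => ⟨hπ.lift ((towerConesMap (fun n => (eqn n).1) hDD).app Z c),
    fun ⟨n, i⟩ => comp_finSym_eq_self hπ hfinSymLift (fun n i => by
      rw [towerCones_lift_comp]
      exact (Category.assoc _ _ _).trans (congrArg _ ((eqn n).2 i))) n i⟩
  naturality Z Z' f := by
    ext c
    refine Subtype.ext ((hπ.comp_lift f.unop _).trans ?_).symm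
    exact congrArg hπ.lift (Subtype.ext (funext fun _ => (Category.assoc _ _ _).symm))

lemma towerConesToInvariantHoms_app_comp {Z : Cᵒᵖ} (c : (towerCones DD).obj Z) (n : ℕ) :
    ((towerConesToInvariantHoms hπ hDD hfinSymLift).app Z c).1 ≫ π.1 n = c.1 n ≫ (eqn n).1 :=
  towerCones_lift_comp hπ _ n

lemma towerConesToInvariantHoms_app_bijective
    (hM : ∀ n, (invariantHoms (sym n)).IsRepresentedBy (eqn n))
    (hfinSym : ∀ n i, finSym n i ≫ π.1 n = π.1 n ≫ sym n i) (Z : Cᵒᵖ) :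
    Function.Bijective ((towerConesToInvariantHoms hπ hDD hfinSymLift).app Z) := by
  constructor
  · intro c c' hcc'
    refine Subtype.ext (funext fun n => (hM n).hom_ext (Subtype.ext ?_))
    have hcomp := congrArg (· ≫ π.1 n) (congrArg Subtype.val hcc')
    simp only [towerConesToInvariantHoms_app_comp] at hcomp
    exact hcomp
  · intro h
    have hinv : ∀ n i, (h.1 ≫ π.1 n) ≫ sym n i = h.1 ≫ π.1 n := fun n i => by
      rw [Category.assoc, ← hfinSym, ← Category.assoc]
      exact congrArg (· ≫ π.1 n) (h.2 ⟨n, i⟩)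
    let c n := (hM n).lift ⟨h.1 ≫ π.1 n, hinv n⟩
    have hc n : c n ≫ (eqn n).1 = h.1 ≫ π.1 n := invariantHoms_lift_comp _ _
    refine ⟨⟨c, fun n => (hM n).hom_ext (Subtype.ext ?_)⟩,
      Subtype.ext (hπ.hom_ext ((towerCones_map_op_eq_iff _ _ _).2 fun n => ?_))⟩
    · change (c (n + 1) ≫ DD n) ≫ (eqn n).1 = c n ≫ (eqn n).1
      rw [Category.assoc, hDD, ← Category.assoc, hc, Category.assoc, π.2, hc]
    · exact (towerConesToInvariantHoms_app_comp hπ hDD hfinSymLift _ n).trans (hc n)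

noncomputable def towerConesIsoInvariantHoms
    (hM : ∀ n, (invariantHoms (sym n)).IsRepresentedBy (eqn n))
    (hfinSym : ∀ n i, finSym n i ≫ π.1 n = π.1 n ≫ sym n i) :
    towerCones DD ≅ invariantHoms (Sigma.uncurry finSym) :=
  haveI (Z : Cᵒᵖ) : IsIso ((towerConesToInvariantHoms hπ hDD hfinSymLift).app Z) :=
    (isIso_iff_bijective _).2
      (towerConesToInvariantHoms_app_bijective hπ hDD hfinSymLift hM hfinSym Z)
  haveI := NatIso.isIso_of_isIso_app (towerConesToInvariantHoms hπ hDD hfinSymLift)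
  asIso (towerConesToInvariantHoms hπ hDD hfinSymLift)

end

lemma exists_towerCones_isRepresentedBy_iff {P : ℕ → C} {d : ∀ n, P (n + 1) ⟶ P n} {L : C}
    {ρ : ∀ n, L ⟶ P n} :
    (∃ hρ, (towerCones d).IsRepresentedBy ⟨ρ, hρ⟩) ↔ (∀ n, ρ (n + 1) ≫ d n = ρ n) ∧
      ∀ (Z : C) (c : ∀ n, Z ⟶ P n), (∀ n, c (n + 1) ≫ d n = c n) →
        ∃! u : Z ⟶ L, ∀ n, u ≫ ρ n = c n :=
  ⟨fun ⟨hρ, H⟩ => ⟨hρ, (towerCones_isRepresentedBy_iff d _).1 H⟩,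
    fun ⟨hρ, H⟩ => ⟨hρ, (towerCones_isRepresentedBy_iff d _).2 H⟩⟩

lemma exists_invariantHoms_uncurry_isRepresentedBy_iff {A : C} {ι : ℕ → Type*}
    {f : ∀ n, ι n → (A ⟶ A)} {L : C} {e : L ⟶ A} :
    (∃ he, (invariantHoms (Sigma.uncurry f)).IsRepresentedBy ⟨e, he⟩) ↔
      (∀ n i, e ≫ f n i = e) ∧ ∀ (Z : C) (h : Z ⟶ A), (∀ n i, h ≫ f n i = h) →
        ∃! u : Z ⟶ L, u ≫ e = h :=
  ⟨fun ⟨he, H⟩ => ⟨fun n i => he ⟨n, i⟩, fun Z h hh =>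
      (invariantHoms_isRepresentedBy_iff _ _).1 H Z h fun p => hh p.1 p.2⟩,
    fun ⟨he, H⟩ => ⟨fun p => he p.1 p.2,
      (invariantHoms_isRepresentedBy_iff _ _).2 fun Z h hh => H Z h fun n i => hh ⟨n, i⟩⟩⟩

end CategoryTheory

theorem stmt_4_general {C : Type u} [Category.{v} C]
    (pow : ℕ → C) (sym : ∀ n, Equiv.Perm (Fin n) → (pow n ⟶ pow n))
    (d : ∀ n, pow (n + 1) ⟶ pow n)
    (Xω : C) (π : ∀ n, Xω ⟶ pow n) (hπ : ∀ n, π (n + 1) ≫ d n = π n)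
    (hπlim : ∀ (Z : C) (c : ∀ n, Z ⟶ pow n), (∀ n, c (n + 1) ≫ d n = c n) →
      ∃! u : Z ⟶ Xω, ∀ n, u ≫ π n = c n)
    (M : ℕ → C) (eqn : ∀ n, M n ⟶ pow n)
    (heq : ∀ n σ, eqn n ≫ sym n σ = eqn n)
    (huniv : ∀ n (Z : C) (g : Z ⟶ pow n), (∀ σ, g ≫ sym n σ = g) →
      ∃! h : Z ⟶ M n, h ≫ eqn n = g)
    (DD : ∀ n, M (n + 1) ⟶ M n)
    (hDD : ∀ n, DD n ≫ eqn n = eqn (n + 1) ≫ d n)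
    (finSym : ∀ n, Equiv.Perm (Fin n) → (Xω ⟶ Xω))
    (hfinSym : ∀ n σ, finSym n σ ≫ π n = π n ≫ sym n σ)
    (hfinSymLift : ∀ (n : ℕ) (σ : Equiv.Perm (Fin n)) (m : ℕ), n ≤ m →
      ∃ τ : Equiv.Perm (Fin m), finSym n σ ≫ π m = π m ≫ sym m τ) :
    ((∃ (L : C) (ρ : ∀ n, L ⟶ M n), (∀ n, ρ (n + 1) ≫ DD n = ρ n) ∧
        ∀ (Z : C) (c : ∀ n, Z ⟶ M n), (∀ n, c (n + 1) ≫ DD n = c n) →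
          ∃! u : Z ⟶ L, ∀ n, u ≫ ρ n = c n) ↔
      (∃ (L' : C) (e : L' ⟶ Xω), (∀ n σ, e ≫ finSym n σ = e) ∧
        ∀ (Z : C) (h : Z ⟶ Xω), (∀ n σ, h ≫ finSym n σ = h) →
          ∃! u : Z ⟶ L', u ≫ e = h)) ∧
    (∀ (L : C) (ρ : ∀ n, L ⟶ M n) (L' : C) (e : L' ⟶ Xω),
      ((∀ n, ρ (n + 1) ≫ DD n = ρ n) ∧
        ∀ (Z : C) (c : ∀ n, Z ⟶ M n), (∀ n, c (n + 1) ≫ DD n = c n) →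
          ∃! u : Z ⟶ L, ∀ n, u ≫ ρ n = c n) →
      ((∀ n σ, e ≫ finSym n σ = e) ∧
        ∀ (Z : C) (h : Z ⟶ Xω), (∀ n σ, h ≫ finSym n σ = h) →
          ∃! u : Z ⟶ L', u ≫ e = h) →
      Nonempty (L ≅ L')) := by
  have hXω : (towerCones d).IsRepresentedBy (⟨π, hπ⟩ : (towerCones d).obj (Opposite.op Xω)) :=
    (towerCones_isRepresentedBy_iff d _).2 hπlim
  have hM n : (invariantHoms (sym n)).IsRepresentedBy
      (⟨eqn n, heq n⟩ : (invariantHoms (sym n)).obj (Opposite.op (M n))) :=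
    (invariantHoms_isRepresentedBy_iff _ _).2 (huniv n)
  let α := towerConesIsoInvariantHoms hXω hDD hfinSymLift hM hfinSym
  refine ⟨⟨fun ⟨L, ρ, hL⟩ => ?_, fun ⟨L', e, hL'⟩ => ?_⟩, fun L ρ L' e hL hL' => ?_⟩
  · obtain ⟨_, hρ⟩ := exists_towerCones_isRepresentedBy_iff.2 hL
    exact ⟨L, _, exists_invariantHoms_uncurry_isRepresentedBy_iff.1 ⟨_, hρ.of_natIso α⟩⟩
  · obtain ⟨_, he⟩ := exists_invariantHoms_uncurry_isRepresentedBy_iff.2 hL'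
    exact ⟨L', _, exists_towerCones_isRepresentedBy_iff.1 ⟨_, he.of_natIso α.symm⟩⟩
  · obtain ⟨_, hρ⟩ := exists_towerCones_isRepresentedBy_iff.2 hL
    obtain ⟨_, he⟩ := exists_invariantHoms_uncurry_isRepresentedBy_iff.2 hL'
    exact ⟨(hρ.of_natIso α).representableBy.uniqueUpToIso he.representableBy⟩

/-- For a `1`-copointed object `(X,w)` in a symmetric monoidal category such that the
draw-and-delete chain over `(X,w)` can be built (tensor powers `pow n`, symmetries
`sym n σ`, equalisers of symmetries `(M n, eqn n)` and draw-and-delete morphisms `DD n`)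
and the delete chain has a limit `(Xω, π)` (so that the finitely supported symmetries
`finSym n σ` on `Xω` are defined), the draw-and-delete chain has a limit if and only if
the equaliser of all finitely supported symmetries on `Xω` exists; and in that case the
two limits are isomorphic. -/
theorem stmt_4 {C : Type u} [Category.{v} C] [MonoidalCategory C] [SymmetricCategory C]
    (X : C) (w : X ⟶ 𝟙_ C)
    (pow : ℕ → C) (sym : ∀ n, Equiv.Perm (Fin n) → (pow n ⟶ pow n))
    (d : ∀ n, pow (n + 1) ⟶ pow n)
    (Xω : C) (π : ∀ n, Xω ⟶ pow n) (hπ : ∀ n, π (n + 1) ≫ d n = π n)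
    (hπlim : ∀ (Z : C) (c : ∀ n, Z ⟶ pow n), (∀ n, c (n + 1) ≫ d n = c n) →
      ∃! u : Z ⟶ Xω, ∀ n, u ≫ π n = c n)
    (hπjoint : ∀ (Z : C) (u v : Z ⟶ Xω) (N : ℕ),
      (∀ m, N ≤ m → u ≫ π m = v ≫ π m) → u = v)
    (M : ℕ → C) (eqn : ∀ n, M n ⟶ pow n)
    (heq : ∀ n σ, eqn n ≫ sym n σ = eqn n)
    (huniv : ∀ n (Z : C) (g : Z ⟶ pow n), (∀ σ, g ≫ sym n σ = g) →
      ∃! h : Z ⟶ M n, h ≫ eqn n = g)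
    (DD : ∀ n, M (n + 1) ⟶ M n)
    (hDD : ∀ n, DD n ≫ eqn n = eqn (n + 1) ≫ d n)
    (finSym : ∀ n, Equiv.Perm (Fin n) → (Xω ⟶ Xω))
    (hfinSym : ∀ n σ, finSym n σ ≫ π n = π n ≫ sym n σ)
    (hfinSymLift : ∀ (n : ℕ) (σ : Equiv.Perm (Fin n)) (m : ℕ), n ≤ m →
      ∃ τ : Equiv.Perm (Fin m), finSym n σ ≫ π m = π m ≫ sym m τ) :
    ((∃ (L : C) (ρ : ∀ n, L ⟶ M n), (∀ n, ρ (n + 1) ≫ DD n = ρ n) ∧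
        ∀ (Z : C) (c : ∀ n, Z ⟶ M n), (∀ n, c (n + 1) ≫ DD n = c n) →
          ∃! u : Z ⟶ L, ∀ n, u ≫ ρ n = c n) ↔
      (∃ (L' : C) (e : L' ⟶ Xω), (∀ n σ, e ≫ finSym n σ = e) ∧
        ∀ (Z : C) (h : Z ⟶ Xω), (∀ n σ, h ≫ finSym n σ = h) →
          ∃! u : Z ⟶ L', u ≫ e = h)) ∧
    (∀ (L : C) (ρ : ∀ n, L ⟶ M n) (L' : C) (e : L' ⟶ Xω),
      ((∀ n, ρ (n + 1) ≫ DD n = ρ n) ∧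
        ∀ (Z : C) (c : ∀ n, Z ⟶ M n), (∀ n, c (n + 1) ≫ DD n = c n) →
          ∃! u : Z ⟶ L, ∀ n, u ≫ ρ n = c n) →
      ((∀ n σ, e ≫ finSym n σ = e) ∧
        ∀ (Z : C) (h : Z ⟶ Xω), (∀ n σ, h ≫ finSym n σ = h) →
          ∃! u : Z ⟶ L', u ≫ e = h) →
      Nonempty (L ≅ L')) :=
  stmt_4_general pow sym d Xω π hπ hπlim M eqn heq huniv DD hDD finSym hfinSym hfinSymLift
end

section
/- Let X be a standard Borel space with a measurable total order, and for n ∈ ℕ let eq_n : M_n X → X^n be the Markov kernel defined as eq_n = (1/n!) Σ_{σ∈S_n} σ̇ ∘ ord, where ord orders a size-n multiset and σ̇ permutes coordinates. Let coeq_n : X^n → M_n X be the (deterministic) kernel sending a tuple to its underlying multiset. Then eq_n ∘ coeq_n = (1/n!) Σ_{σ∈S_n} σ̇ as kernels X^n → X^n. -/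
open ProbabilityTheory MeasureTheory
open scoped ENNReal

/-- Scalar multiple of a kernel by a constant in `ℝ≥0∞`. -/
noncomputable def ksmul {α β : Type*} [MeasurableSpace α] [MeasurableSpace β]
    (c : ℝ≥0∞) (κ : Kernel α β) : Kernel α β :=
  ⟨fun a => c • κ a, Measure.measurable_of_measurable_coe _ (fun s hs => by
    simpa [Measure.smul_apply, smul_eq_mul] using (κ.measurable_coe hs).const_mul c)⟩

/-- The quotient map `X^n → M_n X` sending a tuple to its underlying multiset of size `n`. -/
def coeqFun {X : Type*} (n : ℕ) : (Fin n → X) → Sym X n :=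
  fun a => ⟨(List.ofFn a : Multiset X), by simp⟩

/-- `M_n X`, the space of size-`n` multisets over `X`, carries the quotient σ-algebra
induced by the map `coeqFun`. -/
noncomputable instance symMeasurableSpace {X : Type*} [MeasurableSpace X] (n : ℕ) :
    MeasurableSpace (Sym X n) :=
  MeasurableSpace.map (coeqFun n) inferInstance

theorem coeqFun_measurable {X : Type*} [MeasurableSpace X] (n : ℕ) :
    Measurable (coeqFun (X := X) n) := fun _ h => h

/-- The deterministic kernel permuting the coordinates of a tuple according to `σ`. -/
noncomputable def permKernel {X : Type*} [MeasurableSpace X] {n : ℕ}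
    (σ : Equiv.Perm (Fin n)) : Kernel (Fin n → X) (Fin n → X) :=
  Kernel.deterministic (fun a => a ∘ σ) (by fun_prop)

/-- The kernel `eq_n = (1/n!) Σ_{σ ∈ S_n} σ̇ ∘ ord : M_n X → X^n`. -/
noncomputable def eqKernel {X : Type*} [MeasurableSpace X] (n : ℕ)
    (ord : Sym X n → (Fin n → X)) (hord : Measurable ord) :
    Kernel (Sym X n) (Fin n → X) :=
  ksmul ((n.factorial : ℝ≥0∞))⁻¹
    (∑ σ : Equiv.Perm (Fin n), permKernel σ ∘ₖ Kernel.deterministic ord hord)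

/-! Since `ord` is a section of `coeq_n`, `ord (coeq_n a) = a ∘ τ` for some `τ ∈ S_n`, and
left multiplication by `τ` merely reindexes the sum over `S_n`. -/

lemma exists_perm_comp_eq_of_ofFn_eq {X : Type*} {n : ℕ} {f g : Fin n → X}
    (h : (List.ofFn f : Multiset X) = List.ofFn g) : ∃ σ : Equiv.Perm (Fin n), g ∘ σ = f := by
  classical
  have hfiber (x : X) : Fintype.card {i // f i = x} = Fintype.card {i // g i = x} := by
    have := congrArg (Multiset.count x) h
    simp only [← Fin.univ_val_map, Multiset.count_map] at this
    simpa only [Fintype.card_subtype, Finset.card_def, Finset.filter_val, eq_comm] using this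
  exact ⟨Equiv.ofFiberEquiv fun x => Fintype.equivOfCardEq (hfiber x),
    funext (Equiv.ofFiberEquiv_map _)⟩

lemma sum_comp_perm_eq_of_coeqFun_eq {X M : Type*} [AddCommMonoid M] {n : ℕ}
    (F : (Fin n → X) → M) {a b : Fin n → X} (h : coeqFun n a = coeqFun n b) :
    ∑ σ : Equiv.Perm (Fin n), F (a ∘ σ) = ∑ σ : Equiv.Perm (Fin n), F (b ∘ σ) := by
  obtain ⟨τ, rfl⟩ := exists_perm_comp_eq_of_ofFn_eq (congrArg Subtype.val h)
  exact Equiv.sum_comp (Equiv.mulLeft τ) (fun σ => F (b ∘ σ))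

section Kernels

variable {X : Type*} [MeasurableSpace X] {n : ℕ}

lemma ksmul_apply {α : Type*} [MeasurableSpace α] (c : ℝ≥0∞) (κ : Kernel α X) (a : α) :
    ksmul c κ a = c • κ a := rfl

lemma permKernel_apply (σ : Equiv.Perm (Fin n)) (a : Fin n → X) :
    permKernel σ a = Measure.dirac (a ∘ σ) :=
  Kernel.deterministic_apply _ _

lemma eqKernel_apply (ord : Sym X n → (Fin n → X)) (hord : Measurable ord) (m : Sym X n) :
    eqKernel n ord hord m
      = (n.factorial : ℝ≥0∞)⁻¹ • ∑ σ : Equiv.Perm (Fin n), Measure.dirac (ord m ∘ σ) := by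
  simp only [eqKernel, ksmul_apply, sum_apply, Kernel.comp_deterministic_eq_comap,
    Kernel.comap_apply, permKernel_apply]

end Kernels

theorem stmt_5_general {X : Type*} [MeasurableSpace X] (n : ℕ)
    (ord : Sym X n → (Fin n → X)) (hord : Measurable ord)
    (hsec : ∀ m : Sym X n, coeqFun n (ord m) = m) :
    eqKernel n ord hord ∘ₖ Kernel.deterministic (coeqFun n) (coeqFun_measurable n)
      = ksmul ((n.factorial : ℝ≥0∞))⁻¹ (∑ σ : Equiv.Perm (Fin n), permKernel σ) := by
  ext1 a
  rw [Kernel.comp_deterministic_eq_comap, Kernel.comap_apply, eqKernel_apply, ksmul_apply,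
    sum_apply]
  simp only [permKernel_apply]
  rw [sum_comp_perm_eq_of_coeqFun_eq Measure.dirac (hsec (coeqFun n a))]

/-- For a standard Borel space `X` with a measurable ordering section `ord` of the
multiset quotient map `coeq_n`, the kernel identity
`eq_n ∘ coeq_n = (1/n!) Σ_{σ ∈ S_n} σ̇` holds on `X^n`. -/
theorem stmt_5 {X : Type*} [MeasurableSpace X] [StandardBorelSpace X] (n : ℕ)
    (ord : Sym X n → (Fin n → X)) (hord : Measurable ord)
    (hsec : ∀ m : Sym X n, coeqFun n (ord m) = m) :
    eqKernel n ord hord ∘ₖ Kernel.deterministic (coeqFun n) (coeqFun_measurable n)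
      = ksmul ((n.factorial : ℝ≥0∞))⁻¹ (∑ σ : Equiv.Perm (Fin n), permKernel σ) :=
  stmt_5_general n ord hord hsec
end

section
/- Let X be a standard Borel space and n ∈ ℕ. The pair (M_n X, coeq_n), where coeq_n : X^n → M_n X sends a tuple to its multiset, is a coequaliser in Stoch of the family of all coordinate-permutation kernels σ̇ : X^n → X^n for σ ∈ S_n. -/
/-! Two tuples with the same multiset of entries differ by a permutation (glue bijections between
their equinumerous fibres), so a kernel `g` with `g ∘ σ̇ = g` for all `σ` is constant on the fibres
of `coeq_n`. Precomposing `g` with the measurable section `ord` therefore factors it through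
`coeq_n`; for such `g` this agrees with `g ∘ eq_n`, since averaging over `S_n` changes nothing.
The factorisation is unique because `coeq_n` is surjective. -/

open ProbabilityTheory MeasureTheory
open scoped ENNReal

theorem Fintype.natCard_fiber_eq_count_map_univ {ι β : Type*} [Fintype ι] [DecidableEq β]
    (f : ι → β) (x : β) : Nat.card {i // f i = x} = (Finset.univ.val.map f).count x := by
  rw [Nat.card_eq_fintype_card, Multiset.count_map, Fintype.card_subtype, Finset.card_def,
    Finset.filter_val]
  simp only [eq_comm]

theorem Fintype.exists_perm_of_map_univ_eq {ι β : Type*} [Fintype ι] {f g : ι → β}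
    (h : Finset.univ.val.map f = Finset.univ.val.map g) : ∃ σ : Equiv.Perm ι, f = g ∘ σ := by
  classical
  have hfiber (x : β) : Nonempty ({i // f i = x} ≃ {i // g i = x}) := by
    rw [← Finite.card_eq, natCard_fiber_eq_count_map_univ, natCard_fiber_eq_count_map_univ, h]
  exact ⟨Equiv.ofFiberEquiv fun x => (hfiber x).some,
    funext fun i => (Equiv.ofFiberEquiv_map _ i).symm⟩

theorem coeqFun_eq_coeqFun_iff {X : Type*} {n : ℕ} {a b : Fin n → X} :
    coeqFun n a = coeqFun n b ↔ ∃ σ : Equiv.Perm (Fin n), a = b ∘ σ := by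
  constructor
  · intro h
    apply Fintype.exists_perm_of_map_univ_eq
    rw [Fin.univ_val_map, Fin.univ_val_map]
    exact congrArg Subtype.val h
  · rintro ⟨σ, rfl⟩
    exact Subtype.ext (Multiset.coe_eq_coe.mpr (Equiv.Perm.ofFn_comp_perm σ b))

theorem coeqFun_surjective {X : Type*} {n : ℕ} {ord : Sym X n → (Fin n → X)}
    (hsec : ∀ m, coeqFun n (ord m) = m) : Function.Surjective (coeqFun (X := X) n) :=
  fun m => ⟨ord m, hsec m⟩

namespace ProbabilityTheory.Kernel

variable {α β γ : Type*} [MeasurableSpace α] [MeasurableSpace β] [MeasurableSpace γ]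
  {q : α → β} (hq : Measurable q)

theorem comp_deterministic_injective (hsurj : Function.Surjective q) :
    Function.Injective fun h : Kernel β γ => h ∘ₖ deterministic q hq := by
  intro h h' hh
  ext b : 1
  obtain ⟨a, rfl⟩ := hsurj b
  simpa only [comp_deterministic_eq_comap, comap_apply] using DFunLike.congr_fun hh a

theorem comap_comp_deterministic_of_leftInverse {s : β → α} (hs : Measurable s)
    (hqs : Function.LeftInverse q s) {g : Kernel α γ} (hg : ∀ a a', q a = q a' → g a = g a') :
    g.comap s hs ∘ₖ deterministic q hq = g := by
  ext a : 1
  rw [comp_deterministic_eq_comap, comap_apply, comap_apply]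
  exact hg _ _ (hqs (q a))

end ProbabilityTheory.Kernel

theorem comp_permKernel_apply {X A : Type*} [MeasurableSpace X] [MeasurableSpace A] {n : ℕ}
    (g : Kernel (Fin n → X) A) (σ : Equiv.Perm (Fin n)) (a : Fin n → X) :
    (g ∘ₖ permKernel σ) a = g (a ∘ σ) := by
  rw [permKernel, Kernel.comp_deterministic_eq_comap, Kernel.comap_apply]

theorem eq_of_coeqFun_eq_of_comp_permKernel {X A : Type*} [MeasurableSpace X] [MeasurableSpace A]
    {n : ℕ} {g : Kernel (Fin n → X) A} (hg : ∀ σ : Equiv.Perm (Fin n), g ∘ₖ permKernel σ = g)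
    {a b : Fin n → X} (hab : coeqFun n a = coeqFun n b) : g a = g b := by
  obtain ⟨σ, rfl⟩ := coeqFun_eq_coeqFun_iff.mp hab
  rw [← comp_permKernel_apply, hg]

theorem deterministic_coeqFun_comp_permKernel {X : Type*} [MeasurableSpace X] {n : ℕ}
    (σ : Equiv.Perm (Fin n)) :
    Kernel.deterministic (coeqFun (X := X) n) (coeqFun_measurable n) ∘ₖ permKernel σ
      = Kernel.deterministic (coeqFun (X := X) n) (coeqFun_measurable n) := by
  rw [permKernel, Kernel.deterministic_comp_deterministic]
  congr 1
  funext a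
  exact coeqFun_eq_coeqFun_iff.mpr ⟨σ, rfl⟩

theorem stmt_7_general {X : Type*} [MeasurableSpace X] (n : ℕ)
    (ord : Sym X n → (Fin n → X)) (hord : Measurable ord)
    (hsec : ∀ m : Sym X n, coeqFun n (ord m) = m) :
    (∀ σ : Equiv.Perm (Fin n),
        Kernel.deterministic (coeqFun (X := X) n) (coeqFun_measurable n) ∘ₖ permKernel σ
          = Kernel.deterministic (coeqFun (X := X) n) (coeqFun_measurable n)) ∧
    ∀ (A : Type) (_ : MeasurableSpace A) (g : Kernel (Fin n → X) A), IsMarkovKernel g →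
      (∀ σ : Equiv.Perm (Fin n), g ∘ₖ permKernel σ = g) →
      ∃! h : Kernel (Sym X n) A,
        IsMarkovKernel h ∧ h ∘ₖ Kernel.deterministic (coeqFun (X := X) n) (coeqFun_measurable n) = g := by
  refine ⟨deterministic_coeqFun_comp_permKernel, fun A _ g _ hg => ?_⟩
  have hfactor := Kernel.comap_comp_deterministic_of_leftInverse (coeqFun_measurable n) hord hsec
    fun _ _ => eq_of_coeqFun_eq_of_comp_permKernel hg
  refine ⟨g.comap ord hord, ⟨inferInstance, hfactor⟩, fun h ⟨_, hh⟩ => ?_⟩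
  exact Kernel.comp_deterministic_injective _ (coeqFun_surjective hsec) (hh.trans hfactor.symm)

/-- `(M_n X, coeq_n)` is a coequaliser in `Stoch` of the coordinate-permutation kernels
`σ̇ : X^n → X^n`, `σ ∈ S_n`: the deterministic kernel `coeq_n` coequalises all `σ̇`, and
every Markov kernel `g : X^n → A` coequalising all `σ̇` factors uniquely through `coeq_n`
via a Markov kernel. -/
theorem stmt_7 {X : Type*} [MeasurableSpace X] [StandardBorelSpace X] (n : ℕ)
    (ord : Sym X n → (Fin n → X)) (hord : Measurable ord)
    (hsec : ∀ m : Sym X n, coeqFun n (ord m) = m) :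
    (∀ σ : Equiv.Perm (Fin n),
        Kernel.deterministic (coeqFun (X := X) n) (coeqFun_measurable n) ∘ₖ permKernel σ
          = Kernel.deterministic (coeqFun (X := X) n) (coeqFun_measurable n)) ∧
    ∀ (A : Type) (_ : MeasurableSpace A) (g : Kernel (Fin n → X) A), IsMarkovKernel g →
      (∀ σ : Equiv.Perm (Fin n), g ∘ₖ permKernel σ = g) →
      ∃! h : Kernel (Sym X n) A,
        IsMarkovKernel h ∧ h ∘ₖ Kernel.deterministic (coeqFun (X := X) n) (coeqFun_measurable n) = g :=
  stmt_7_general n ord hord hsec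
end

section
/- Let E be a Polish space and (X₁, X₂, …) an infinite exchangeable sequence of E-valued random variables on a probability space Ω. Define the empirical measures Z_n : Ω → P(E) by Z_n = (1/n) Σ_{i=1}^n δ_{X_i}. Then the family of laws (law(Z_n))_{n∈ℕ} ⊆ P(P(E)) is tight. -/
/-!
Every `X i` has the law `μ` of `X 0` (swap the coordinates `0` and `i`), so every empirical
measure `Z n` has mean measure `μ`, which is tight since `E` is Polish. Choose compacts `K m`
with `μ (K m)ᶜ ≤ δ m * 2⁻¹ ^ m`, where `∑ δ m < ε`. By Markov's inequality
`Z n (K m)ᶜ ≥ 2⁻¹ ^ m` has probability at most `δ m`, so outside an event of probability `< ε`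
the measure `Z n` lies in `{α | ∀ m, α (K m)ᶜ ≤ 2⁻¹ ^ m}`. This set of measures is tight, hence
has compact closure by Prokhorov's theorem.
-/

open MeasureTheory Set
open scoped ENNReal

/-- The σ-algebra on `P(E)` induced from the Giry σ-algebra on measures. -/
noncomputable instance probabilityMeasureMeasurableSpace {E : Type*} [MeasurableSpace E] :
    MeasurableSpace (ProbabilityMeasure E) :=
  MeasurableSpace.comap (fun μ => (μ : Measure E)) inferInstance

theorem MeasureTheory.ProbabilityMeasure.measurable_apply {E : Type*} [MeasurableSpace E]
    {s : Set E} (hs : MeasurableSet s) :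
    Measurable fun α : ProbabilityMeasure E => (α : Measure E) s :=
  (Measure.measurable_coe hs).comp measurable_subtype_coe

theorem map_eq_map_zero_of_exchangeable {E Ω : Type*} [MeasurableSpace E] [MeasurableSpace Ω]
    {P : Measure Ω} {X : ℕ → Ω → E} (hX : ∀ i, Measurable (X i))
    (hexch : ∀ (n : ℕ) (σ : Equiv.Perm (Fin n)),
      Measure.map (fun ω (i : Fin n) => X (σ i) ω) P
        = Measure.map (fun ω (i : Fin n) => X i ω) P) (i : ℕ) :
    P.map (X i) = P.map (X 0) := by
  have h := congrArg (Measure.map fun x : Fin (i + 1) → E => x 0)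
    (hexch (i + 1) (Equiv.swap 0 (Fin.last i)))
  rwa [Measure.map_map (measurable_pi_apply _) (measurable_pi_lambda _ fun _ => hX _),
    Measure.map_map (measurable_pi_apply _) (measurable_pi_lambda _ fun _ => hX _)] at h

theorem lintegral_dirac_apply {E Ω : Type*} [MeasurableSpace E] [MeasurableSpace Ω]
    {P : Measure Ω} {Y : Ω → E} (hY : Measurable Y) {s : Set E} (hs : MeasurableSet s) :
    ∫⁻ ω, Measure.dirac (Y ω) s ∂P = P.map Y s := by
  simp only [Measure.dirac_apply' _ hs]
  rw [← lintegral_map (measurable_one.indicator hs) hY, lintegral_indicator_one hs]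

section Empirical

variable {E Ω : Type*} [MeasurableSpace E] [MeasurableSpace Ω] {P : Measure Ω} {X : ℕ → Ω → E}
  {n : ℕ} {Z : Ω → ProbabilityMeasure E}

theorem measurable_of_coe_eq_sum_dirac (hX : ∀ i, Measurable (X i))
    (hZ : ∀ ω, (Z ω : Measure E)
      = ((n + 1 : ℕ) : ℝ≥0∞)⁻¹ • ∑ i : Fin (n + 1), Measure.dirac (X i ω)) :
    Measurable Z := by
  have : Measurable fun ω => (Z ω : Measure E) := by
    refine Measure.measurable_of_measurable_coe _ fun s hs => ?_
    simp only [hZ, Measure.smul_apply, Measure.coe_finsetSum, Finset.sum_apply, smul_eq_mul]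
    refine Measurable.const_mul ?_ _
    exact Finset.measurable_sum _ fun i _ =>
      (Measure.measurable_coe hs).comp (Measure.measurable_dirac.comp (hX i))
  exact this.subtype_mk

theorem lintegral_apply_of_coe_eq_sum_dirac {μ : Measure E} (hX : ∀ i, Measurable (X i))
    (hμ : ∀ i, P.map (X i) = μ)
    (hZ : ∀ ω, (Z ω : Measure E)
      = ((n + 1 : ℕ) : ℝ≥0∞)⁻¹ • ∑ i : Fin (n + 1), Measure.dirac (X i ω))
    {s : Set E} (hs : MeasurableSet s) :
    ∫⁻ ω, (Z ω : Measure E) s ∂P = μ s := by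
  simp only [hZ, Measure.smul_apply, Measure.coe_finsetSum, Finset.sum_apply, smul_eq_mul]
  rw [lintegral_const_mul' _ _ (by simp), lintegral_finsetSum _ fun i _ => ?_]
  · simp only [lintegral_dirac_apply (hX _) hs, hμ, Finset.sum_const, Finset.card_univ,
      Fintype.card_fin, nsmul_eq_mul]
    rw [← mul_assoc, ENNReal.inv_mul_cancel (by simp) (by simp), one_mul]
  · exact (Measure.measurable_coe hs).comp (Measure.measurable_dirac.comp (hX i))

end Empirical

theorem isTightMeasureSet_of_lintegral_apply_le {E : Type*} [TopologicalSpace E] [T2Space E]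
    [MeasurableSpace E] [BorelSpace E] {μ : Measure E} (hμ : IsTightMeasureSet {μ})
    {S : Set (Measure (ProbabilityMeasure E))}
    (hS : ∀ ν ∈ S, ∀ s, MeasurableSet s → ∫⁻ α, (α : Measure E) s ∂ν ≤ μ s) :
    IsTightMeasureSet S := by
  rw [isTightMeasureSet_iff_exists_isCompact_measure_compl_le] at hμ ⊢
  intro ε hε
  obtain ⟨δ, hδ_pos, hδ_sum⟩ := ENNReal.exists_pos_sum_of_countable' hε.ne' ℕ
  set u : ℕ → ℝ≥0∞ := fun m => 2⁻¹ ^ m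
  have hu_ne_zero (m : ℕ) : u m ≠ 0 := by simp [u]
  have hu_ne_top (m : ℕ) : u m ≠ ∞ := by simp [u]
  choose K hK_compact hKμ using fun m =>
    hμ (δ m * u m) (ENNReal.mul_pos (hδ_pos m).ne' (hu_ne_zero m))
  set T := {α : ProbabilityMeasure E | ∀ m, (α : Measure E) (K m)ᶜ ≤ u m}
  have hT : IsTightMeasureSet {(α : Measure E) | α ∈ T} := by
    rw [isTightMeasureSet_iff_exists_isCompact_measure_compl_le]
    intro η hη
    obtain ⟨m, hm⟩ := ENNReal.exists_inv_two_pow_lt hη.ne'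
    exact ⟨K m, hK_compact m, by rintro _ ⟨α, hα, rfl⟩; exact (hα m).trans hm.le⟩
  refine ⟨closure T, isCompact_closure_of_isTightMeasureSet hT, fun ν hν => ?_⟩
  have hbad (m : ℕ) : ν {α | u m ≤ (α : Measure E) (K m)ᶜ} ≤ δ m :=
    calc ν {α | u m ≤ (α : Measure E) (K m)ᶜ}
        ≤ (∫⁻ α, (α : Measure E) (K m)ᶜ ∂ν) / u m :=
          meas_ge_le_lintegral_div
            (ProbabilityMeasure.measurable_apply (hK_compact m).measurableSet.compl).aemeasurable
            (hu_ne_zero m) (hu_ne_top m)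
      _ ≤ μ (K m)ᶜ / u m := by gcongr; exact hS ν hν _ (hK_compact m).measurableSet.compl
      _ ≤ δ m * u m / u m := by gcongr; exact hKμ m μ rfl
      _ = δ m := ENNReal.mul_div_cancel_right (hu_ne_zero m) (hu_ne_top m)
  have hcover : (closure T)ᶜ ⊆ ⋃ m, {α | u m ≤ (α : Measure E) (K m)ᶜ} := by
    intro α hα
    have : α ∉ T := fun h => hα (subset_closure h)
    simp only [T, mem_ofPred_eq, not_forall, not_le] at this
    obtain ⟨m, hm⟩ := this
    exact mem_iUnion.2 ⟨m, hm.le⟩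
  calc ν (closure T)ᶜ ≤ ∑' m, ν {α | u m ≤ (α : Measure E) (K m)ᶜ} :=
        (measure_mono hcover).trans (measure_iUnion_le _)
    _ ≤ ∑' m, δ m := ENNReal.tsum_le_tsum hbad
    _ ≤ ε := hδ_sum.le

/-- For an infinite exchangeable sequence `(X_i)` of `E`-valued random variables on a
probability space `(Ω, P)` with `E` Polish, the laws of the empirical measures
`Z_n = (1/(n+1)) Σ_{i≤n} δ_{X_i}` form a tight family of probability measures on the
space `P(E)` of probability measures with the topology of weak convergence. -/
theorem stmt_8 {E : Type*} [TopologicalSpace E] [PolishSpace E]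
    [MeasurableSpace E] [BorelSpace E]
    {Ω : Type*} [MeasurableSpace Ω] (P : Measure Ω) [IsProbabilityMeasure P]
    (X : ℕ → Ω → E) (hX : ∀ i, Measurable (X i))
    (hexch : ∀ (n : ℕ) (σ : Equiv.Perm (Fin n)),
      Measure.map (fun ω (i : Fin n) => X (σ i) ω) P
        = Measure.map (fun ω (i : Fin n) => X i ω) P)
    (Z : ℕ → Ω → ProbabilityMeasure E)
    (hZ : ∀ n ω, (Z n ω : Measure E)
        = ((n + 1 : ℕ) : ℝ≥0∞)⁻¹ • ∑ i : Fin (n + 1), Measure.dirac (X i ω)) :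
    ∀ ε : ℝ≥0∞, 0 < ε → ∃ K : Set (ProbabilityMeasure E), IsCompact K ∧
      ∀ n, 1 - ε ≤ Measure.map (Z n) P K := by
  intro ε hε
  have hZ_meas (n : ℕ) : Measurable (Z n) := measurable_of_coe_eq_sum_dirac hX (hZ n)
  have htight : IsTightMeasureSet (range fun n => P.map (Z n)) := by
    refine isTightMeasureSet_of_lintegral_apply_le (μ := P.map (X 0))
      isTightMeasureSet_singleton ?_
    rintro _ ⟨n, rfl⟩ s hs
    rw [lintegral_map (ProbabilityMeasure.measurable_apply hs) (hZ_meas n),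
      lintegral_apply_of_coe_eq_sum_dirac hX (map_eq_map_zero_of_exchangeable hX hexch) (hZ n) hs]
  obtain ⟨K, hK, hKle⟩ :=
    (isTightMeasureSet_iff_exists_isCompact_measure_compl_le.1 htight) ε hε
  refine ⟨K, hK, fun n => ?_⟩
  have : IsProbabilityMeasure (P.map (Z n)) :=
    Measure.isProbabilityMeasure_map (hZ_meas n).aemeasurable
  calc 1 - ε ≤ 1 - P.map (Z n) Kᶜ := tsub_le_tsub_left (hKle _ ⟨n, rfl⟩) 1
    _ ≤ P.map (Z n) K := by
      rw [tsub_le_iff_right, ← measure_univ (μ := P.map (Z n))]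
      exact measure_univ_le_add_compl K
end

section
/- Let X = Y = [0,1] with Borel σ-algebras, and let μ₀ be the pushforward of Lebesgue measure on [0,1] under r ↦ (r,r), i.e. the uniform measure on the diagonal Δ of [0,1]². Define h : FMeas([0,1]²) → ℝ≥0 by h(ν) = ν₀([0,1]²), where ν = ν₀ + ν₁ is the Lebesgue decomposition of ν with ν₀ ≪ μ₀ and ν₁ ⊥ μ₀. Then h is additive, positively homogeneous, and monotone, h is not identically zero, but h(a × b) = 0 for every pair of finite Borel measures a, b on [0,1]. -/
/-!
The absolutely continuous part of `ν` with respect to `μ₀` is `μ₀.withDensity (dν/dμ₀)`, and the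
Radon–Nikodym derivative is additive and positively homogeneous in `ν`; monotonicity follows by
writing `ν' = (ν' - ν) + ν`. A product `a × b` is singular to `μ₀`: the countably many atoms of `a`
are invisible to the diffuse measure `μ₀`, while every horizontal slice of the rest of the
diagonal is a single point of `a`-measure zero (or empty), so by Tonelli that set is
`(a × b)`-null.
-/
open MeasureTheory
open scoped ENNReal NNReal unitInterval

/-- The uniform measure on the diagonal of `[0,1]²`: the pushforward of Lebesgue measure
on `[0,1]` under `r ↦ (r,r)`. -/
noncomputable def diagMeasure : Measure (I × I) :=
  Measure.map (fun r : I => (r, r)) (Measure.comap Subtype.val volume)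

/-- The functional `h(ν) = ν₀([0,1]²)` where `ν = ν₀ + ν₁` is the Lebesgue decomposition
of `ν` with `ν₀ ≪ μ₀` and `ν₁ ⊥ μ₀` (so `ν₀ = μ₀.withDensity (ν.rnDeriv μ₀)`). -/
noncomputable def hFun (ν : Measure (I × I)) : ℝ≥0∞ :=
  (diagMeasure.withDensity (ν.rnDeriv diagMeasure)) Set.univ

namespace MeasureTheory.Measure

variable {α : Type*} [MeasurableSpace α]

section LebesgueDecomposition

variable (ν ν' μ : Measure α) [SigmaFinite ν] [SigmaFinite ν'] [SigmaFinite μ]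

lemma withDensity_rnDeriv_add :
    μ.withDensity ((ν + ν').rnDeriv μ) =
      μ.withDensity (ν.rnDeriv μ) + μ.withDensity (ν'.rnDeriv μ) := by
  rw [withDensity_congr_ae (rnDeriv_add' ν ν' μ),
    withDensity_add_left (measurable_rnDeriv ν μ)]

lemma withDensity_rnDeriv_smul (c : ℝ≥0) :
    μ.withDensity ((c • ν).rnDeriv μ) = c • μ.withDensity (ν.rnDeriv μ) := by
  rw [withDensity_congr_ae (rnDeriv_smul_left' ν μ c)]
  simp_rw [ENNReal.smul_def]
  exact withDensity_smul _ (measurable_rnDeriv ν μ)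

end LebesgueDecomposition

lemma withDensity_rnDeriv_mono {ν ν' : Measure α} [IsFiniteMeasure ν'] (μ : Measure α)
    [SigmaFinite μ] (h : ν ≤ ν') :
    μ.withDensity (ν.rnDeriv μ) ≤ μ.withDensity (ν'.rnDeriv μ) := by
  have hν : IsFiniteMeasure ν := isFiniteMeasure_of_le ν' h
  have hν'ν : IsFiniteMeasure (ν' - ν) := isFiniteMeasure_of_le ν' sub_le
  calc μ.withDensity (ν.rnDeriv μ)
      ≤ μ.withDensity ((ν' - ν).rnDeriv μ) + μ.withDensity (ν.rnDeriv μ) :=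
        Measure.le_add_left le_rfl
    _ = μ.withDensity (ν'.rnDeriv μ) := by
      rw [← withDensity_rnDeriv_add, sub_add_cancel_of_le h]

lemma countable_setOf_measure_singleton_pos [MeasurableSingletonClass α] (μ : Measure α)
    [SFinite μ] : {x | 0 < μ {x}}.Countable :=
  countable_meas_pos_of_disjoint_iUnion (fun _ ↦ measurableSet_singleton _)
    fun _ _ h ↦ Set.disjoint_singleton.2 h

theorem prod_mutuallySingular_map_diag [MeasurableEq α] (a b m : Measure α) [SFinite a]
    [SFinite b] [NullSingletonClass m] :
    a.prod b ⟂ₘ m.map (fun x ↦ (x, x)) := by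
  set atoms := {x | 0 < a {x}}
  have h_atoms : atoms.Countable := countable_setOf_measure_singleton_pos a
  set S := Set.diagonal α ∩ Prod.fst ⁻¹' atomsᶜ
  have hS : MeasurableSet S :=
    measurableSet_diagonal.inter (h_atoms.measurableSet.compl.preimage measurable_fst)
  refine ⟨S, hS, ?_, ?_⟩
  · have h_slice (y : α) : a ((fun x ↦ (x, y)) ⁻¹' S) = 0 := by
      have h_sub : (fun x ↦ (x, y)) ⁻¹' S ⊆ {y} ∩ atomsᶜ := fun x hx ↦ hx
      by_cases hy : y ∈ atoms
      · refine measure_mono_null (h_sub.trans fun x hx ↦ ?_) measure_empty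
        exact hx.2 (hx.1 ▸ hy)
      · exact measure_mono_null (h_sub.trans Set.inter_subset_left) (by simpa [atoms] using hy)
    simp [prod_apply_symm hS, h_slice]
  · rw [map_apply (by fun_prop) hS.compl]
    refine measure_mono_null (fun x hx ↦ ?_) (h_atoms.measure_zero m)
    simpa [S] using hx

end MeasureTheory.Measure

open MeasureTheory Measure

lemma diagMeasure_eq_map_volume : diagMeasure = (volume : Measure I).map fun r ↦ (r, r) := rfl

instance : IsProbabilityMeasure diagMeasure := by
  rw [diagMeasure_eq_map_volume]
  exact isProbabilityMeasure_map (measurable_id.prodMk measurable_id).aemeasurable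

/-- The functional `h` on finite Borel measures on `[0,1]²` given by the total mass of the
part absolutely continuous w.r.t. the uniform measure on the diagonal is additive,
positively homogeneous and monotone; it is not identically zero; yet it vanishes on all
product measures `a × b` of finite Borel measures on `[0,1]`. -/
theorem stmt_9 :
    (∀ ν ν' : Measure (I × I), IsFiniteMeasure ν → IsFiniteMeasure ν' →
        hFun (ν + ν') = hFun ν + hFun ν') ∧
    (∀ (c : ℝ≥0) (ν : Measure (I × I)), IsFiniteMeasure ν →
        hFun (c • ν) = c * hFun ν) ∧
    (∀ ν ν' : Measure (I × I), IsFiniteMeasure ν → IsFiniteMeasure ν' →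
        ν ≤ ν' → hFun ν ≤ hFun ν') ∧
    (∃ ν : Measure (I × I), IsFiniteMeasure ν ∧ hFun ν ≠ 0) ∧
    (∀ a b : Measure I, IsFiniteMeasure a → IsFiniteMeasure b →
        hFun (a.prod b) = 0) := by
  refine ⟨fun ν ν' _ _ ↦ ?_, fun c ν _ ↦ ?_, fun ν ν' _ _ h ↦ ?_,
    ⟨diagMeasure, inferInstance, ?_⟩, fun a b _ _ ↦ ?_⟩
  · rw [hFun, withDensity_rnDeriv_add, add_apply, hFun, hFun]
  · rw [hFun, withDensity_rnDeriv_smul, Measure.smul_apply, ENNReal.smul_def, smul_eq_mul, hFun]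
  · exact withDensity_rnDeriv_mono diagMeasure h Set.univ
  · rw [hFun, withDensity_rnDeriv_eq _ _ AbsolutelyContinuous.rfl, measure_univ]
    exact one_ne_zero
  · have h_sing : a.prod b ⟂ₘ diagMeasure := prod_mutuallySingular_map_diag a b volume
    rw [hFun, withDensity_congr_ae h_sing.rnDeriv_ae_eq_zero, withDensity_zero, Measure.coe_zero,
      Pi.zero_apply]
end

section
/- Let X be a countable discrete measurable space. In the category PCoh of probabilistic coherence spaces, the canonical copointed-object morphism α = ⟨id, w⟩ : X^PCoh → X^PCoh & 1 (pairing the identity with the total-weight map w) induces, for each n, a morphism M_n α between the equalisers of symmetries, given by the matrix (M_n α)_{μ,ν} = multinomial(μ − ν) if ν ⊆ μ (as multisets) and 0 otherwise, where μ ranges over size-n multisets on X and ν over multisets of size ≤ n on X; and these morphisms form a chain morphism from the De Finetti draw-and-delete chain to the approximations chain. -/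
/-!
Write `ν_b` for the multiset of `X`-entries of a tuple `b` over `X ⊔ {⋆}`. The entry
`(α^{⊗n} ∘ eq_n)_{μ,b}` counts the enumerations `a` of `μ` with `a i = x` wherever `b i = some x`;
these are the enumerations of `μ - ν_b` placed on the `⋆`-positions, so there are
`multinomial(μ - ν_b)` of them when `ν_b ⊆ μ`. The column `b` of `eq'_n` has a single `1`, in row
`ν_b`, and every row is reached, so `eq'_n` cancels on the left: this gives both the equation
`eq'_n ∘ M_n α = α^{⊗n} ∘ eq_n` and the uniqueness of `M_n α`.

The chain equation only involves the size-`n` sub-multisets of `μ`, namely the `μ - [x]`, and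
reduces to the recursion `∑_{x ∈ ρ} multinomial(ρ - [x]) = multinomial(ρ)` for `ρ = μ - ν ≠ 0`,
which classifies the enumerations of `ρ` by their first letter.
-/

open scoped ENNReal Classical

noncomputable section

/-- A `PCoh`-style matrix from a web `I` to a web `J`. -/
def Mat (I J : Type*) := I → J → ℝ≥0∞

/-- Matrix composition (first `f`, then `g`). -/
def mcomp {I J K : Type*} (f : Mat I J) (g : Mat J K) : Mat I K :=
  fun i k => ∑' j : J, f i j * g j k

/-- Multisets of size at most `n` over `X`: the web of `M_n (X^PCoh & 1)`. -/
def MleSet (X : Type*) (n : ℕ) := {m : Multiset X // Multiset.card m ≤ n}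

/-- The multinomial coefficient of a finite multiset: the number of its enumerations. -/
def multinom {X : Type*} (m : Multiset X) : ℕ :=
  (Multiset.card m).factorial / m.toFinset.prod fun a => (m.count a).factorial

/-- The quotient map sending a tuple to its multiset. -/
def tupMset {X : Type*} {n : ℕ} (a : Fin n → X) : Multiset X := (List.ofFn a : Multiset X)

/-- The equaliser matrix `eq_n : M_n X^PCoh → (X^PCoh)^{⊗n}`,
`(eq_n)_{μ,(a₁,…,a_n)} = δ_{μ,[a₁,…,a_n]}`. -/
def eqMat (X : Type*) (n : ℕ) : Mat (Sym X n) (Fin n → X) :=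
  fun μ a => if tupMset a = (μ : Multiset X) then 1 else 0

/-- The equaliser matrix for `(X^PCoh & 1)^{⊗n}`, under the identification of size-`n`
multisets over `X ⊔ {⋆}` with multisets of size `≤ n` over `X` (padding with `⋆`, i.e.
with `none`). -/
def eqMat' (X : Type*) (n : ℕ) : Mat (MleSet X n) (Fin n → Option X) :=
  fun ν b => if tupMset b
    = ν.1.map some + Multiset.replicate (n - Multiset.card ν.1) none then 1 else 0

/-- The matrix of the copointed morphism `α = ⟨id, w⟩ : X^PCoh → X^PCoh & 1`. -/
def alphaMat (X : Type*) : Mat X (Option X) :=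
  fun x y => if y = some x ∨ y = none then 1 else 0

/-- The `n`-fold tensor power `α^{⊗n}`. -/
def alphaPow (X : Type*) (n : ℕ) : Mat (Fin n → X) (Fin n → Option X) :=
  fun a b => ∏ i : Fin n, alphaMat X (a i) (b i)

/-- The matrix `(M_n α)_{μ,ν} = multinomial(μ-ν)` if `ν ⊆ μ`, and `0` otherwise. -/
def MalphaMat (X : Type*) (n : ℕ) : Mat (Sym X n) (MleSet X n) :=
  fun μ ν => if ν.1 ≤ (μ : Multiset X) then (multinom ((μ : Multiset X) - ν.1) : ℝ≥0∞) else 0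

/-- The De Finetti draw-and-delete matrix `M_{n+1} X → M_n X` (in the concrete
presentation of the equalisers of symmetries in `PCoh` by the δ-matrices `eq_n`), the
unique matrix with `eq_n ∘ DD_n = (X^{⊗n} ⊗ w) ∘ eq_{n+1}`. -/
def DDDF (X : Type*) (n : ℕ) : Mat (Sym X (n + 1)) (Sym X n) :=
  fun μ ν => if (ν : Multiset X) ≤ (μ : Multiset X) then 1 else 0

/-- The draw-and-delete matrix of the approximations chain, `(DD_n)_{μ,ν} = δ_{μ,ν}`. -/
def DDBang (X : Type*) (n : ℕ) : Mat (MleSet X (n + 1)) (MleSet X n) :=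
  fun μ ν => if μ.1 = ν.1 then 1 else 0


namespace Multiset

variable {X : Type*}

theorem cons_le_iff_mem_sub {μ ν : Multiset X} (hν : ν ≤ μ) (x : X) :
    x ::ₘ ν ≤ μ ↔ x ∈ μ - ν := by
  rw [← singleton_le, le_tsub_iff_left hν, ← singleton_add, add_comm]

theorem cons_le_iff_le_erase {μ ν : Multiset X} {x : X} (hx : x ∈ μ) :
    x ::ₘ ν ≤ μ ↔ ν ≤ μ.erase x := by
  conv_lhs => rw [← cons_erase hx]
  exact cons_le_cons_iff x

theorem sub_cons_eq_erase_sub (μ ν : Multiset X) (x : X) : μ - x ::ₘ ν = (μ - ν).erase x := by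
  rw [← sub_singleton, tsub_tsub, add_comm, singleton_add]

theorem cons_eq_iff_eq_erase {x : X} {s μ : Multiset X} :
    x ::ₘ s = μ ↔ x ∈ μ ∧ s = μ.erase x := by
  constructor
  · rintro rfl
    exact ⟨mem_cons_self x s, (erase_cons_head x s).symm⟩
  · rintro ⟨hx, rfl⟩
    exact cons_erase hx

theorem exists_mem_erase_eq_of_le {σ μ : Multiset X} (h : σ ≤ μ) (hcard : card μ = card σ + 1) :
    ∃ x ∈ μ, μ.erase x = σ := by
  obtain ⟨u, rfl⟩ := le_iff_exists_add.1 h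
  obtain ⟨x, rfl⟩ := card_eq_one.1 (by simpa using hcard)
  rw [add_comm, singleton_add]
  exact ⟨x, mem_cons_self x σ, erase_cons_head x σ⟩

theorem eq_of_mem_of_erase_eq {μ : Multiset X} {x y : X} (hx : x ∈ μ) (hy : y ∈ μ)
    (h : μ.erase x = μ.erase y) : x = y := by
  have := (cons_erase hx).trans (cons_erase hy).symm
  rwa [h, cons_inj_left] at this

/-- Forgets the `⋆`s (`none`s); it inverts the padding in `eqMat'`. -/
def reduceOption (m : Multiset (Option X)) : Multiset X := m.filterMap id

@[simp] theorem reduceOption_cons_some (x : X) (m : Multiset (Option X)) :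
    reduceOption (some x ::ₘ m) = x ::ₘ reduceOption m :=
  filterMap_cons_some _ _ _ rfl

@[simp] theorem reduceOption_cons_none (m : Multiset (Option X)) :
    reduceOption (none ::ₘ m) = reduceOption m :=
  filterMap_cons_none _ _ rfl

theorem card_reduceOption_add_count_none (m : Multiset (Option X)) :
    card (reduceOption m) + m.count none = card m := by
  induction m using Multiset.induction_on with
  | empty => rfl
  | cons a m ih =>
    cases a with
    | none => simp only [reduceOption_cons_none, count_cons_self, card_cons]; omega
    | some x =>
      simp only [reduceOption_cons_some, count_cons_of_ne (Option.some_ne_none x).symm, card_cons]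
      omega

theorem map_some_reduceOption_add (m : Multiset (Option X)) :
    (reduceOption m).map some + replicate (m.count none) none = m := by
  induction m using Multiset.induction_on with
  | empty => rfl
  | cons a m ih =>
    cases a with
    | none =>
      rw [reduceOption_cons_none, count_cons_self, replicate_succ, add_cons, ih]
    | some x =>
      rw [reduceOption_cons_some, count_cons_of_ne (Option.some_ne_none x).symm, map_cons,
        cons_add, ih]

@[simp] theorem reduceOption_map_some_add (ν : Multiset X) (k : ℕ) :
    reduceOption (ν.map some + replicate k none) = ν := by
  induction k with
  | zero => simp [reduceOption, filterMap_map]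
  | succ k ih => rwa [replicate_succ, add_cons, reduceOption_cons_none]

end Multiset

open Multiset

section Multinomial

variable {X : Type*}

theorem multinom_eq_countPerms (m : Multiset X) : multinom m = m.countPerms := by
  rw [countPerms, Finsupp.multinomial_eq, Nat.multinomial, multinom, toFinsupp_support]
  simp only [toFinsupp_apply, toFinset_sum_count_eq]

theorem card_mul_multinom_erase {m : Multiset X} {x : X} (hx : x ∈ m) :
    card m * multinom (m.erase x) = m.count x * multinom m := by
  have hk : card m = card (m.erase x) + 1 := (card_erase_add_one hx).symm
  have hc : m.count x = (m.erase x).count x + 1 := by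
    rw [count_erase_self]; have := count_pos.2 hx; omega
  have hfilter : (m.erase x).filter (x ≠ ·) = m.filter (x ≠ ·) := by
    conv_rhs => rw [← cons_erase hx]
    rw [filter_cons_of_neg _ (by simp)]
  simp only [multinom_eq_countPerms, countPerms_filter_ne x m, countPerms_filter_ne x (m.erase x),
    hfilter, hk, hc]
  rw [← mul_assoc, Nat.add_one_mul_choose_eq]
  ring

theorem sum_multinom_erase {m : Multiset X} (hm : m ≠ 0) :
    ∑ x ∈ m.toFinset, multinom (m.erase x) = multinom m := by
  refine Nat.eq_of_mul_eq_mul_left (card_pos.2 hm) ?_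
  rw [Finset.mul_sum, Finset.sum_congr rfl fun x hx => card_mul_multinom_erase (mem_toFinset.1 hx),
    ← Finset.sum_mul, toFinset_sum_count_eq]

def multinomSub (μ ν : Multiset X) : ℕ := if ν ≤ μ then multinom (μ - ν) else 0

theorem multinomSub_cons (μ ν : Multiset X) (x : X) :
    multinomSub μ (x ::ₘ ν) = if x ∈ μ then multinomSub (μ.erase x) ν else 0 := by
  by_cases hx : x ∈ μ
  · simp only [multinomSub, if_pos hx, cons_le_iff_le_erase hx, sub_cons]
  · have : ¬ x ::ₘ ν ≤ μ := fun h => hx (mem_of_le h (mem_cons_self x ν))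
    simp only [multinomSub, if_neg hx, if_neg this]

theorem sum_multinomSub_erase {μ ν : Multiset X} (hcard : card ν < card μ) :
    ∑ x ∈ μ.toFinset, multinomSub (μ.erase x) ν = multinomSub μ ν := by
  by_cases hν : ν ≤ μ
  · have hsub : (μ - ν).toFinset ⊆ μ.toFinset :=
      toFinset_subset.2 fun x hx => mem_of_le tsub_le_self hx
    have hne : μ - ν ≠ 0 := fun h => by
      have := card_sub hν; rw [h, card_zero] at this; omega
    have hterm : ∀ x ∈ μ.toFinset, multinomSub (μ.erase x) ν
        = if x ∈ (μ - ν).toFinset then multinom ((μ - ν).erase x) else 0 := fun x hx => by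
      have h := multinomSub_cons μ ν x
      rw [if_pos (mem_toFinset.1 hx), multinomSub] at h
      simp only [← h, cons_le_iff_mem_sub hν, sub_cons_eq_erase_sub, mem_toFinset]
    rw [Finset.sum_congr rfl hterm, Finset.sum_ite_mem, Finset.inter_eq_right.2 hsub,
      sum_multinom_erase hne, multinomSub, if_pos hν]
  · refine (Finset.sum_eq_zero fun x _ => ?_).trans (if_neg hν).symm
    exact if_neg fun h => hν (h.trans (erase_le x μ))

end Multinomial

section Matrices

variable {X : Type*}

theorem tupMset_cons {n : ℕ} (x : X) (a : Fin n → X) :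
    tupMset (Fin.cons x a : Fin (n + 1) → X) = x ::ₘ tupMset a := by
  simp [tupMset, List.ofFn_succ]

@[simp] theorem card_tupMset {n : ℕ} (a : Fin n → X) : card (tupMset a) = n := by
  simp [tupMset]

theorem exists_tupMset_eq {n : ℕ} {m : Multiset X} (hm : card m = n) :
    ∃ a : Fin n → X, tupMset a = m := by
  induction m using Quot.ind with
  | mk l =>
    subst hm
    exact ⟨fun i => l[i], congrArg _ List.ofFn_getElem⟩

theorem card_reduceOption_tupMset_le {n : ℕ} (b : Fin n → Option X) :
    card (reduceOption (tupMset b)) ≤ n := by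
  have := card_reduceOption_add_count_none (tupMset b)
  rw [card_tupMset] at this
  omega

theorem eqMat'_apply {n : ℕ} (ν : MleSet X n) (b : Fin n → Option X) :
    eqMat' X n ν b = if ν.1 = reduceOption (tupMset b) then 1 else 0 := by
  refine if_congr ⟨fun h => by rw [h, reduceOption_map_some_add], fun h => ?_⟩ rfl rfl
  have hcard := card_reduceOption_add_count_none (tupMset b)
  rw [card_tupMset] at hcard
  rw [h, ← map_some_reduceOption_add (tupMset b), reduceOption_map_some_add]
  congr 2
  omega

theorem mcomp_eqMat'_apply {I : Type*} {n : ℕ} (m : Mat I (MleSet X n)) (i : I)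
    (b : Fin n → Option X) :
    mcomp m (eqMat' X n) i b = m i ⟨reduceOption (tupMset b), card_reduceOption_tupMset_le b⟩ := by
  refine (tsum_eq_single ⟨reduceOption (tupMset b), card_reduceOption_tupMset_le b⟩
    fun ν hν => ?_).trans ?_
  · simp only [eqMat'_apply, if_neg fun h => hν (Subtype.ext h), mul_zero]
  · exact congrArg (m i _ * ·) ((eqMat'_apply _ b).trans (if_pos rfl)) |>.trans (mul_one _)

@[simp] theorem alphaMat_some (x y : X) : alphaMat X x (some y) = if x = y then 1 else 0 := by
  simp [alphaMat, eq_comm]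

@[simp] theorem alphaMat_none (x : X) : alphaMat X x none = 1 := by
  simp [alphaMat]

theorem alphaPow_cons {n : ℕ} (x : X) (a : Fin n → X) (y : Option X) (b : Fin n → Option X) :
    alphaPow X (n + 1) (Fin.cons x a) (Fin.cons y b) = alphaMat X x y * alphaPow X n a b := by
  simp [alphaPow, Fin.prod_univ_succ]

theorem tsum_ite_tupMset_alphaPow {n : ℕ} (μ : Multiset X) (b : Fin n → Option X)
    (hμ : card μ = n) :
    ∑' a : Fin n → X, (if tupMset a = μ then alphaPow X n a b else 0)
      = (multinomSub μ (reduceOption (tupMset b)) : ℝ≥0∞) := by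
  induction n generalizing μ with
  | zero =>
    obtain rfl := card_eq_zero.1 hμ
    simp [tupMset, alphaPow, multinomSub, multinom, reduceOption]
  | succ n ih =>
    obtain ⟨y, b, rfl⟩ : ∃ y b', b = Fin.cons y b' :=
      ⟨b 0, Fin.tail b, (Fin.cons_self_tail b).symm⟩
    have inner : ∀ x, ∑' a : Fin n → X,
          (if x ::ₘ tupMset a = μ then alphaMat X x y * alphaPow X n a b else 0)
        = alphaMat X x y *
          if x ∈ μ then (multinomSub (μ.erase x) (reduceOption (tupMset b)) : ℝ≥0∞) else 0 :=
      fun x => by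
      by_cases hx : x ∈ μ
      · simp only [cons_eq_iff_eq_erase, hx, true_and, ← mul_ite_zero, ENNReal.tsum_mul_left,
          if_true, ih _ _ (by rw [card_erase_of_mem hx, hμ]; rfl)]
      · simp [cons_eq_iff_eq_erase, hx]
    rw [← (Fin.consEquiv fun _ => X).tsum_eq, ENNReal.tsum_prod']
    have hcons : ∀ x (a : Fin n → X), (Fin.consEquiv fun _ => X) (x, a) = Fin.cons x a :=
      fun _ _ => rfl
    simp only [hcons, tupMset_cons, alphaPow_cons, inner]
    -- `some y` pins the first letter of `a` to `y`, while `⋆` leaves it free in `μ`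
    cases y with
    | some y =>
      simp only [alphaMat_some, ite_mul, one_mul, zero_mul, tsum_ite_eq, reduceOption_cons_some,
        multinomSub_cons, Nat.cast_ite, Nat.cast_zero]
    | none =>
      have hcard : card (reduceOption (tupMset b)) < card μ :=
        hμ ▸ Nat.lt_succ_of_le (card_reduceOption_tupMset_le b)
      simp only [alphaMat_none, one_mul, reduceOption_cons_none]
      rw [tsum_eq_sum (s := μ.toFinset) fun x hx => if_neg (mt mem_toFinset.2 hx),
        Finset.sum_congr rfl fun x hx => if_pos (mem_toFinset.1 hx), ← Nat.cast_sum,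
        sum_multinomSub_erase hcard]

theorem tsum_sym_ite_le_eq_sum_erase {n : ℕ} {μ : Multiset X} (hμ : card μ = n + 1)
    (f : Multiset X → ℝ≥0∞) :
    ∑' σ : Sym X n, (if (σ : Multiset X) ≤ μ then f σ else 0)
      = ∑ x ∈ μ.toFinset, f (μ.erase x) := by
  let g : μ.toFinset → Sym X n := fun x =>
    ⟨μ.erase x, by rw [card_erase_of_mem (mem_toFinset.1 x.2), hμ]; rfl⟩
  have hg : Function.Injective g := fun x y h =>
    Subtype.ext <| eq_of_mem_of_erase_eq (mem_toFinset.1 x.2) (mem_toFinset.1 y.2)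
      (congrArg Sym.toMultiset h)
  have hsupp : Function.support (fun σ : Sym X n => if (σ : Multiset X) ≤ μ then f σ else 0)
      ⊆ Set.range g := fun σ hσ => by
    have hle : (σ : Multiset X) ≤ μ := by by_contra h; exact hσ (if_neg h)
    obtain ⟨x, hx, hxσ⟩ := exists_mem_erase_eq_of_le hle (by simp [hμ])
    exact ⟨⟨x, mem_toFinset.2 hx⟩, Subtype.ext hxσ⟩
  rw [← hg.tsum_eq hsupp, ← Finset.tsum_subtype]
  exact tsum_congr fun x => if_pos (erase_le _ _)

theorem MalphaMat_apply {n : ℕ} (μ : Sym X n) (ν : MleSet X n) :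
    MalphaMat X n μ ν = (multinomSub (μ : Multiset X) ν.1 : ℝ≥0∞) := by
  simp only [MalphaMat, multinomSub, Nat.cast_ite, Nat.cast_zero]

theorem mcomp_MalphaMat_eqMat' (n : ℕ) :
    mcomp (MalphaMat X n) (eqMat' X n) = mcomp (eqMat X n) (alphaPow X n) := by
  funext μ b
  calc mcomp (MalphaMat X n) (eqMat' X n) μ b
      = MalphaMat X n μ ⟨reduceOption (tupMset b), card_reduceOption_tupMset_le b⟩ :=
        mcomp_eqMat'_apply _ μ b
    _ = multinomSub (μ : Multiset X) (reduceOption (tupMset b)) := MalphaMat_apply _ _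
    _ = ∑' a, if tupMset a = (μ : Multiset X) then alphaPow X n a b else 0 :=
        (tsum_ite_tupMset_alphaPow _ b μ.2).symm
    _ = mcomp (eqMat X n) (alphaPow X n) μ b := tsum_congr fun a => (boole_mul _ _).symm

theorem mcomp_eqMat'_cancel_left {I : Type*} {n : ℕ} {m m' : Mat I (MleSet X n)}
    (h : mcomp m (eqMat' X n) = mcomp m' (eqMat' X n)) : m = m' := by
  funext i ν
  obtain ⟨b, hb⟩ := exists_tupMset_eq (n := n)
    (m := ν.1.map some + replicate (n - card ν.1) none) (by simp [ν.2])
  have hν : (⟨reduceOption (tupMset b), card_reduceOption_tupMset_le b⟩ : MleSet X n) = ν :=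
    Subtype.ext (show reduceOption (tupMset b) = ν.1 by rw [hb, reduceOption_map_some_add])
  have := congrFun (congrFun h i) b
  rwa [mcomp_eqMat'_apply, mcomp_eqMat'_apply, hν] at this

theorem mcomp_DDBang_apply {I : Type*} {n : ℕ} (m : Mat I (MleSet X (n + 1))) (i : I)
    (ν : MleSet X n) : mcomp m (DDBang X n) i ν = m i ⟨ν.1, ν.2.trans n.le_succ⟩ := by
  refine (tsum_eq_single ⟨ν.1, ν.2.trans n.le_succ⟩ fun ν' hν' => ?_).trans
    ((congrArg (m i _ * ·) (if_pos rfl)).trans (mul_one _))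
  exact mul_eq_zero_of_right _ (if_neg fun h => hν' (Subtype.ext h))

theorem mcomp_DDDF_MalphaMat (n : ℕ) :
    mcomp (DDDF X n) (MalphaMat X n) = mcomp (MalphaMat X (n + 1)) (DDBang X n) := by
  funext μ ν
  have hcard : card ν.1 < card (μ : Multiset X) := by
    rw [μ.card_coe]; exact Nat.lt_succ_of_le ν.2
  calc mcomp (DDDF X n) (MalphaMat X n) μ ν
      = ∑' σ : Sym X n, if (σ : Multiset X) ≤ μ then (multinomSub σ ν.1 : ℝ≥0∞) else 0 :=
        tsum_congr fun σ => (boole_mul _ _).trans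
          (congrArg (fun t => if (σ : Multiset X) ≤ μ then t else 0) (MalphaMat_apply σ ν))
    _ = ∑ x ∈ (μ : Multiset X).toFinset, (multinomSub ((μ : Multiset X).erase x) ν.1 : ℝ≥0∞) :=
        tsum_sym_ite_le_eq_sum_erase μ.card_coe (fun m => (multinomSub m ν.1 : ℝ≥0∞))
    _ = multinomSub (μ : Multiset X) ν.1 := by rw [← Nat.cast_sum, sum_multinomSub_erase hcard]
    _ = MalphaMat X (n + 1) μ ⟨ν.1, ν.2.trans n.le_succ⟩ :=
        (MalphaMat_apply μ ⟨ν.1, ν.2.trans n.le_succ⟩).symm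
    _ = mcomp (MalphaMat X (n + 1)) (DDBang X n) μ ν := (mcomp_DDBang_apply _ μ ν).symm

end Matrices

theorem stmt_12_general (X : Type*) (n : ℕ) :
    (mcomp (MalphaMat X n) (eqMat' X n) = mcomp (eqMat X n) (alphaPow X n)) ∧
    (∀ m : Mat (Sym X n) (MleSet X n),
      mcomp m (eqMat' X n) = mcomp (eqMat X n) (alphaPow X n) → m = MalphaMat X n) ∧
    (mcomp (DDDF X n) (MalphaMat X n) = mcomp (MalphaMat X (n + 1)) (DDBang X n)) :=
  ⟨mcomp_MalphaMat_eqMat' n,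
    fun _ hm => mcomp_eqMat'_cancel_left (hm.trans (mcomp_MalphaMat_eqMat' n).symm),
    mcomp_DDDF_MalphaMat n⟩

/-- For a countable discrete space `X`, the copointed morphism `α = ⟨id,w⟩` induces on
the equalisers of symmetries the morphisms `M_n α` with matrix
`(M_n α)_{μ,ν} = multinomial(μ-ν)` for `ν ⊆ μ` (and `0` otherwise): these are the unique
matrices satisfying `eq'_n ∘ M_n α = α^{⊗n} ∘ eq_n`, and they form a chain morphism from
the De Finetti draw-and-delete chain to the approximations chain. -/
theorem stmt_12 (X : Type*) [Countable X] (n : ℕ) :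
    (mcomp (MalphaMat X n) (eqMat' X n) = mcomp (eqMat X n) (alphaPow X n)) ∧
    (∀ m : Mat (Sym X n) (MleSet X n),
      mcomp m (eqMat' X n) = mcomp (eqMat X n) (alphaPow X n) → m = MalphaMat X n) ∧
    (mcomp (DDDF X n) (MalphaMat X n) = mcomp (MalphaMat X (n + 1)) (DDBang X n)) :=
  stmt_12_general X n

end
end

section
/- Let X be a countable set. For any PCS A with web X, the free exponential !A has web the finite multisets over X and P(!A) = {x^! : x ∈ P(A)}^{⊥⊥}, where x^!_{[a₁,…,a_n]} = Π_i x_{a_i}. Then for any element u ∈ P(!A) that is total (u ∈ {z^! : z ∈ T(A)}^{⊫⊫} where T(A) is the set of total elements of A with Σ_x z_x = 1 and ⊫ is the strict orthogonality ⟨u,v⟩ = 1), and for every finite multiset μ over X: u_μ = Σ_{x∈X} u_{μ+[x]}. -/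
/-! Let `v` be a test vector: `⟨x^!, v⟩ ≤ 1` for all `x ∈ P(A)`, with equality for total `x`.
Moving the mass `v_μ` from `μ` to every `μ + [a]` turns the `μ`-term `v_μ x^!_μ` of
`⟨x^!, v⟩` into `v_μ x^!_μ Σ_a x_a`, which is no larger when `Σ_a x_a ≤ 1` and the same when
`Σ_a x_a = 1`; so the new vector is again a test vector. A total `u` pairs to `1` with both, and
cancelling the common part gives `v_μ u_μ = v_μ Σ_a u_{μ+[a]}`. A test vector with
`0 < v_μ < ∞` is the number of tuples in `X^n`, `n = |μ|`, listing a multiset: its pairing with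
`x^!` is `(Σ_a x_a)^n`. -/

open scoped ENNReal

noncomputable section

/-- The pairing `⟨u,v⟩ = Σ_a u_a v_a` of two nonnegative vectors over a web `I`. -/
def pairing {I : Type*} (u v : I → ℝ≥0∞) : ℝ≥0∞ := ∑' a : I, u a * v a

/-- The (lax) dual of a set of vectors: `S^⊥ = {v : ∀ u ∈ S, ⟨u,v⟩ ≤ 1}`. -/
def laxDual {I : Type*} (S : Set (I → ℝ≥0∞)) : Set (I → ℝ≥0∞) :=
  {v | ∀ u ∈ S, pairing u v ≤ 1}

/-- Strict dual of `U ⊆ P` (for a PCS with element set `P`):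
`U^⊫ = {v ∈ P^⊥ : ∀ u ∈ U, ⟨u,v⟩ = 1}`. -/
def strictDual {I : Type*} (P U : Set (I → ℝ≥0∞)) : Set (I → ℝ≥0∞) :=
  {v | v ∈ laxDual P ∧ ∀ u ∈ U, pairing u v = 1}

/-- Strict bidual, landing back among the elements:
`V^⊫ = {u ∈ P : ∀ v ∈ V, ⟨u,v⟩ = 1}`. -/
def strictDualBack {I : Type*} (P V : Set (I → ℝ≥0∞)) : Set (I → ℝ≥0∞) :=
  {u | u ∈ P ∧ ∀ v ∈ V, pairing u v = 1}

/-- Promotion `x^!` of a vector `x : X → ℝ≥0∞`, defined on finite multisets by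
`x^!_μ = Π_{a ∈ μ} x_a` (with multiplicity). -/
def promotion {X : Type*} (x : X → ℝ≥0∞) (μ : Multiset X) : ℝ≥0∞ := (μ.map x).prod

/-- Elements of the PCS `A = X^PCoh`: the subprobability vectors on `X`. -/
def subProb (X : Type*) : Set (X → ℝ≥0∞) := {x | ∑' a : X, x a ≤ 1}

/-- Total elements of `X^PCoh`: the probability vectors on `X`. -/
def totalVec (X : Type*) : Set (X → ℝ≥0∞) := {x | ∑' a : X, x a = 1}

/-- Elements of the free exponential `!A`: the bidual closure of the promotions of
elements of `A`. -/
def bangElems (X : Type*) : Set (Multiset X → ℝ≥0∞) :=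
  laxDual (laxDual {u | ∃ x ∈ subProb X, u = promotion x})

/-- Total elements of `!A`: the strict bidual `{z^! : z ∈ T(A)}^{⊫⊫}` of the promotions
of total elements of `A`. -/
def bangTotal (X : Type*) : Set (Multiset X → ℝ≥0∞) :=
  strictDualBack (bangElems X)
    (strictDual (bangElems X) {u | ∃ x ∈ totalVec X, u = promotion x})

section Pairing

variable {I : Type*}

lemma pairing_comm (u v : I → ℝ≥0∞) : pairing u v = pairing v u :=
  tsum_congr fun _ => mul_comm _ _

lemma pairing_add_right (u v w : I → ℝ≥0∞) :
    pairing u (v + w) = pairing u v + pairing u w := by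
  simp only [pairing, Pi.add_apply, mul_add]
  exact ENNReal.tsum_add

lemma pairing_smul_right (c : ℝ≥0∞) (u v : I → ℝ≥0∞) :
    pairing u (c • v) = c * pairing u v := by
  simp only [pairing, Pi.smul_apply, smul_eq_mul, mul_left_comm _ c]
  exact ENNReal.tsum_mul_left

lemma pairing_eq_pairing_indicator_compl_add (u v : I → ℝ≥0∞) (i : I) :
    pairing u v = pairing u (({i}ᶜ : Set I).indicator v) + v i * u i := by
  conv_lhs => rw [← Set.indicator_compl_add_self {i} v]
  rw [pairing_add_right]
  congr 1
  rw [pairing, tsum_eq_single i fun j hj => by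
    simp [Set.indicator_of_notMem (Set.notMem_singleton_iff.2 hj)]]
  simp [mul_comm]

def fiberCard {J : Type*} (g : J → I) (i : I) : ℝ≥0∞ := (g ⁻¹' {i}).encard

lemma pairing_fiberCard {J : Type*} (u : I → ℝ≥0∞) (g : J → I) :
    pairing u (fiberCard g) = ∑' j, u (g j) := by
  rw [← ENNReal.tsum_fiberwise _ g, pairing]
  refine tsum_congr fun i => ?_
  rw [fiberCard, mul_comm, ← ENNReal.tsum_set_const]
  exact tsum_congr fun j => by rw [j.2]

lemma subset_laxDual_laxDual (S : Set (I → ℝ≥0∞)) : S ⊆ laxDual (laxDual S) :=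
  fun u hu v hv => pairing_comm v u ▸ hv u hu

lemma laxDual_anti {S T : Set (I → ℝ≥0∞)} (h : S ⊆ T) : laxDual T ⊆ laxDual S :=
  fun _ hv u hu => hv u (h hu)

lemma laxDual_laxDual_laxDual (S : Set (I → ℝ≥0∞)) :
    laxDual (laxDual (laxDual S)) = laxDual S :=
  (laxDual_anti (subset_laxDual_laxDual S)).antisymm (subset_laxDual_laxDual _)

end Pairing

section Promotion

variable {X : Type*}

lemma promotion_add_singleton (x : X → ℝ≥0∞) (μ : Multiset X) (a : X) :
    promotion x (μ + {a}) = promotion x μ * x a := by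
  simp [promotion]

lemma promotion_ofFn (x : X → ℝ≥0∞) {n : ℕ} (f : Fin n → X) :
    promotion x (List.ofFn f : Multiset X) = ∏ i, x (f i) := by
  simp [promotion, List.map_ofFn, List.prod_ofFn]

lemma tsum_prod_fin_eq_pow (x : X → ℝ≥0∞) (n : ℕ) :
    ∑' f : Fin n → X, ∏ i, x (f i) = (∑' a, x a) ^ n := by
  induction n with
  | zero => simp
  | succ n ih =>
    have hcons (p : X × (Fin n → X)) :
        ∏ i, x (Fin.consEquiv (fun _ => X) p i) = x p.1 * ∏ i, x (p.2 i) := by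
      simp [Fin.consEquiv, Fin.prod_univ_succ]
    rw [← (Fin.consEquiv fun _ => X).tsum_eq, tsum_congr hcons,
      ENNReal.tsum_prod (f := fun (a : X) (g : Fin n → X) => x a * ∏ i, x (g i)), pow_succ',
      ← ih, ← ENNReal.tsum_mul_right]
    exact tsum_congr fun a => ENNReal.tsum_mul_left

end Promotion

def bangTotalDual (X : Type*) : Set (Multiset X → ℝ≥0∞) :=
  strictDual (bangElems X) {u | ∃ x ∈ totalVec X, u = promotion x}

/-- For `n = card μ` this is the multinomial coefficient of `μ`; it vanishes otherwise. -/
def listingCount (X : Type*) (n : ℕ) : Multiset X → ℝ≥0∞ :=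
  fiberCard fun f : Fin n → X => (List.ofFn f : Multiset X)

section Bang

variable {X : Type*}

lemma mem_bangTotalDual_iff {v : Multiset X → ℝ≥0∞} :
    v ∈ bangTotalDual X ↔ (∀ x ∈ subProb X, pairing (promotion x) v ≤ 1) ∧
      ∀ x ∈ totalVec X, pairing (promotion x) v = 1 := by
  rw [bangTotalDual, strictDual, bangElems, laxDual_laxDual_laxDual]
  simp only [laxDual, Set.mem_ofPred_eq, forall_exists_index, and_imp]
  exact and_congr ⟨fun h x hx => h _ x hx rfl, fun h _ x hx hu => hu ▸ h x hx⟩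
    ⟨fun h x hx => h _ x hx rfl, fun h _ x hx hu => hu ▸ h x hx⟩

def shiftMass (v : Multiset X → ℝ≥0∞) (μ : Multiset X) : Multiset X → ℝ≥0∞ :=
  ({μ}ᶜ : Set _).indicator v + v μ • fiberCard fun a : X => μ + {a}

lemma pairing_shiftMass (u v : Multiset X → ℝ≥0∞) (μ : Multiset X) :
    pairing u (shiftMass v μ) =
      pairing u (({μ}ᶜ : Set _).indicator v) + v μ * ∑' a, u (μ + {a}) := by
  rw [shiftMass, pairing_add_right, pairing_smul_right, pairing_fiberCard]

lemma shiftMass_mem_bangTotalDual {v : Multiset X → ℝ≥0∞} (hv : v ∈ bangTotalDual X)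
    (μ : Multiset X) : shiftMass v μ ∈ bangTotalDual X := by
  have key (x : X → ℝ≥0∞) : pairing (promotion x) (shiftMass v μ) =
      pairing (promotion x) (({μ}ᶜ : Set _).indicator v) +
        v μ * promotion x μ * ∑' a, x a := by
    simp only [pairing_shiftMass, promotion_add_singleton, ENNReal.tsum_mul_left, mul_assoc]
  rw [mem_bangTotalDual_iff] at hv ⊢
  refine ⟨fun x hx => ?_, fun x hx => ?_⟩
  · calc pairing (promotion x) (shiftMass v μ)
        ≤ pairing (promotion x) (({μ}ᶜ : Set _).indicator v) +
            v μ * promotion x μ * 1 := by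
          rw [key]; gcongr; exact hx
      _ = pairing (promotion x) v := by rw [mul_one, ← pairing_eq_pairing_indicator_compl_add]
      _ ≤ 1 := hv.1 x hx
  · rw [key, hx, mul_one, ← pairing_eq_pairing_indicator_compl_add]
    exact hv.2 x hx

theorem apply_eq_tsum_apply_add_singleton_of_mem_bangTotal {u v : Multiset X → ℝ≥0∞}
    (hu : u ∈ bangTotal X) (hv : v ∈ bangTotalDual X) {μ : Multiset X} (hv₀ : v μ ≠ 0)
    (hv_top : v μ ≠ ∞) : u μ = ∑' a, u (μ + {a}) := by
  have h₁ : pairing u (({μ}ᶜ : Set _).indicator v) + v μ * u μ = 1 := by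
    rw [← pairing_eq_pairing_indicator_compl_add]; exact hu.2 v hv
  have h₂ : pairing u (({μ}ᶜ : Set _).indicator v) + v μ * ∑' a, u (μ + {a}) = 1 := by
    rw [← pairing_shiftMass]; exact hu.2 _ (shiftMass_mem_bangTotalDual hv μ)
  have h_fin : pairing u (({μ}ᶜ : Set _).indicator v) ≠ ∞ :=
    ne_top_of_le_ne_top ENNReal.one_ne_top (h₁ ▸ le_self_add)
  exact (ENNReal.mul_right_inj hv₀ hv_top).mp
    ((ENNReal.add_right_inj h_fin).mp (h₁.trans h₂.symm))

lemma pairing_promotion_listingCount (x : X → ℝ≥0∞) (n : ℕ) :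
    pairing (promotion x) (listingCount X n) = (∑' a, x a) ^ n := by
  simp only [listingCount, pairing_fiberCard, promotion_ofFn, tsum_prod_fin_eq_pow]

lemma listingCount_mem_bangTotalDual (n : ℕ) : listingCount X n ∈ bangTotalDual X := by
  simp only [mem_bangTotalDual_iff, pairing_promotion_listingCount]
  exact ⟨fun x hx => pow_le_one₀ zero_le hx, fun x hx => by rw [hx, one_pow]⟩

lemma listingCount_card_ne_zero (μ : Multiset X) : listingCount X (Multiset.card μ) μ ≠ 0 := by
  induction μ using Quotient.inductionOn with
  | h l =>
    simp only [listingCount, fiberCard]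
    rw [ne_eq, ENat.toENNReal_eq_zero, ← ne_eq, Set.encard_ne_zero]
    exact ⟨l.get, congrArg _ (List.ofFn_get l)⟩

lemma listingCount_ne_top (n : ℕ) (μ : Multiset X) : listingCount X n μ ≠ ∞ := by
  simp only [listingCount, fiberCard]
  rw [ne_eq, ENat.toENNReal_eq_top, ← ne_eq, Set.encard_ne_top_iff]
  refine (Set.Finite.pi' fun _ => μ.finite_toSet).subset fun f hf i => ?_
  rw [Set.mem_preimage, Set.mem_singleton_iff] at hf
  simp [← hf, List.mem_ofFn]

end Bang

theorem stmt_13_general {X : Type*} (u : Multiset X → ℝ≥0∞)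
    (hu : u ∈ bangTotal X) (μ : Multiset X) :
    u μ = ∑' x : X, u (μ + {x}) :=
  apply_eq_tsum_apply_add_singleton_of_mem_bangTotal hu (listingCount_mem_bangTotalDual _)
    (listingCount_card_ne_zero μ) (listingCount_ne_top _ μ)

/-- Every total element `u` of the free exponential `!X^PCoh` over a countable set `X`
satisfies the recursion `u_μ = Σ_{x∈X} u_{μ+[x]}` for every finite multiset `μ` over
`X`. -/
theorem stmt_13 {X : Type*} [Countable X] (u : Multiset X → ℝ≥0∞)
    (hu : u ∈ bangTotal X) (μ : Multiset X) :
    u μ = ∑' x : X, u (μ + {x}) :=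
  stmt_13_general u hu μ

end
end

section
/- Let L be a limit cone (L, g_i : L → D_i) over a diagram D of cones (ℝ≥0-semimodule cones with norms, with morphisms linear, ω-continuous, 1-bounded maps). Then: (1) for all x, y ∈ L, if g_i(x) = g_i(y) for all i then x = y; (2) for every x ∈ L, ‖x‖ = sup_i ‖g_i(x)‖. -/
open scoped NNReal

noncomputable section

/-- A cone in the sense of Ehrhard–Geoffroy: an `ℝ≥0`-semimodule with cancellation and
positivity, equipped with a homogeneous, separating, subadditive, monotone and
ω-continuous norm.  The order is `x ≤ y` iff `∃ x', x + x' = y`. -/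
structure PCone : Type 1 where
  carrier : Type
  add : carrier → carrier → carrier
  smul : ℝ≥0 → carrier → carrier
  zero : carrier
  norm : carrier → ℝ≥0
  add_comm : ∀ x y, add x y = add y x
  add_assoc : ∀ x y z, add (add x y) z = add x (add y z)
  zero_add : ∀ x, add zero x = x
  one_smul : ∀ x, smul 1 x = x
  mul_smul : ∀ a b x, smul (a * b) x = smul a (smul b x)
  smul_add : ∀ a x y, smul a (add x y) = add (smul a x) (smul a y)
  add_smul : ∀ a b x, smul (a + b) x = add (smul a x) (smul b x)
  smul_zero : ∀ a, smul a zero = zero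
  zero_smul : ∀ x, smul 0 x = zero
  cancel : ∀ x y z, add x z = add y z → x = y
  positivity : ∀ x y, add x y = zero → x = zero
  norm_smul : ∀ a x, norm (smul a x) = a * norm x
  norm_sep : ∀ x, norm x = 0 → x = zero
  norm_triangle : ∀ x y, norm (add x y) ≤ norm x + norm y
  norm_pos : ∀ x y, norm x ≤ norm (add x y)
  norm_omega : ∀ (s : ℕ → carrier) (x : carrier),
    (∀ n, ∃ c, add (s n) c = s (n + 1)) →
    ((∀ n, ∃ c, add (s n) c = x) ∧
      ∀ y, (∀ n, ∃ c, add (s n) c = y) → ∃ c, add x c = y) →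
    norm x = ⨆ n, norm (s n)

/-- The order `x ≤ y ↔ ∃ c, x + c = y` on a cone. -/
def PCone.le (P : PCone) (x y : P.carrier) : Prop := ∃ c, P.add x c = y

/-- `x` is the least upper bound of the ω-chain `s`. -/
def PCone.isLub (P : PCone) (s : ℕ → P.carrier) (x : P.carrier) : Prop :=
  (∀ n, P.le (s n) x) ∧ ∀ y, (∀ n, P.le (s n) y) → P.le x y

/-- Morphisms of cones: linear, ω-continuous, and sending the unit ball into the
unit ball. -/
structure IsConeHom (P Q : PCone) (f : P.carrier → Q.carrier) : Prop where
  map_add : ∀ x y, f (P.add x y) = Q.add (f x) (f y)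
  map_smul : ∀ a x, f (P.smul a x) = Q.smul a (f x)
  omega_cont : ∀ (s : ℕ → P.carrier) (x : P.carrier),
    (∀ n, P.le (s n) (s (n + 1))) → P.isLub s x → Q.isLub (fun n => f (s n)) (f x)
  bounded : ∀ x, P.norm x ≤ 1 → Q.norm (f x) ≤ 1

/-! Both claims are tested against the flat cone `F_α`: pairs `(a, b) ∈ ℝ≥0 × ℝ` with
`a = 0 → b = 0`, normed by `α * a`. A strictly increasing chain in `F_α` has upper bounds with
arbitrarily small second coordinate, hence no least one; so every linear map out of `F_α` is
ω-continuous, and the ray `p ↦ p.1 • x` is a morphism `F_α → L` exactly when `‖x‖ ≤ α`.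
The unit cone would not do: `λ ↦ λ • x` out of `ℝ≥0` need not be ω-continuous.

(1) If `g_i x = g_i y` for all `i`, the rays of `x` and `y` induce the same cone over `D`, so they
coincide by uniqueness of the factorization; evaluate at `(1, 0)`.
(2) For `α > ⨆ i, ‖g_i x‖` the rays of the `g_i x` form a cone over `D`; by (1) its factorization
through `L` is the ray of `x`, which is therefore 1-bounded, i.e. `‖x‖ ≤ α`. -/

lemma PCone.norm_zero (P : PCone) : P.norm P.zero = 0 := by
  simpa [P.zero_smul] using P.norm_smul 0 P.zero

namespace IsConeHom

variable {P Q : PCone} {f : P.carrier → Q.carrier}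

lemma map_zero (hf : IsConeHom P Q f) : f P.zero = Q.zero := by
  simpa [P.zero_smul, Q.zero_smul] using hf.map_smul 0 P.zero

lemma norm_map_le (hf : IsConeHom P Q f) (x : P.carrier) : Q.norm (f x) ≤ P.norm x := by
  rcases eq_zero_or_pos (P.norm x) with h0 | hpos
  · rw [h0, P.norm_sep x h0, hf.map_zero, Q.norm_zero]
  · have hunit : P.norm (P.smul (P.norm x)⁻¹ x) ≤ 1 := by
      rw [P.norm_smul, inv_mul_cancel₀ hpos.ne']
    have := hf.bounded _ hunit
    rwa [hf.map_smul, Q.norm_smul, inv_mul_le_iff₀ hpos, mul_one] at this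

lemma comp {R : PCone} {k : Q.carrier → R.carrier} (hf : IsConeHom P Q f) (hk : IsConeHom Q R k) :
    IsConeHom P R (fun x => k (f x)) where
  map_add x y := by rw [hf.map_add, hk.map_add]
  map_smul a x := by rw [hf.map_smul, hk.map_smul]
  omega_cont s x hchain hlub := by
    refine hk.omega_cont _ _ (fun n => ?_) (hf.omega_cont s x hchain hlub)
    obtain ⟨c, hc⟩ := hchain n
    exact ⟨f c, by rw [← hf.map_add, hc]⟩
  bounded x hx := hk.bounded _ (hf.bounded x hx)

lemma of_isLub_attained (hP : ∀ s u, P.isLub s u → ∃ N, s N = u)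
    (hadd : ∀ x y, f (P.add x y) = Q.add (f x) (f y))
    (hsmul : ∀ a x, f (P.smul a x) = Q.smul a (f x))
    (hbdd : ∀ x, P.norm x ≤ 1 → Q.norm (f x) ≤ 1) : IsConeHom P Q f where
  map_add := hadd
  map_smul := hsmul
  bounded := hbdd
  omega_cont s u _ hlub := by
    obtain ⟨N, rfl⟩ := hP s u hlub
    refine ⟨fun n => ?_, fun y hy => hy N⟩
    obtain ⟨c, hc⟩ := hlub.1 n
    exact ⟨f c, by rw [← hadd, hc]⟩

end IsConeHom

def flatSubmodule : Submodule ℝ≥0 (ℝ≥0 × ℝ) where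
  carrier := {p | p.1 = 0 → p.2 = 0}
  add_mem' {p q} hp hq h := by
    obtain ⟨hp1, hq1⟩ := add_eq_zero.mp h
    simp [hp hp1, hq hq1]
  zero_mem' _ := rfl
  smul_mem' t p hp h := by
    rcases mul_eq_zero.mp h with ht | hp1
    · simp [ht]
    · simp [hp hp1]

namespace flatSubmodule

lemma eq_zero_of_fst_eq_zero {p : flatSubmodule} (h : p.1.1 = 0) : p = 0 :=
  Subtype.ext (Prod.ext h (p.2 h))

lemma exists_add_eq_iff {p q : flatSubmodule} : (∃ c, p + c = q) ↔ p = q ∨ p.1.1 < q.1.1 := by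
  constructor
  · rintro ⟨c, rfl⟩
    rcases eq_zero_or_pos c.1.1 with hc | hc
    · simp [eq_zero_of_fst_eq_zero hc]
    · exact Or.inr (by simpa using hc)
  · rintro (rfl | hlt)
    · exact ⟨0, add_zero p⟩
    · refine ⟨⟨(q.1.1 - p.1.1, q.1.2 - p.1.2), fun h => absurd h (tsub_pos_of_lt hlt).ne'⟩, ?_⟩
      exact Subtype.ext (Prod.ext (add_tsub_cancel_of_le hlt.le) (add_sub_cancel _ _))

lemma exists_eq_of_isLub {s : ℕ → flatSubmodule} {u : flatSubmodule}
    (hub : ∀ n, ∃ c, s n + c = u) (hleast : ∀ v, (∀ n, ∃ c, s n + c = v) → ∃ c, u + c = v) :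
    ∃ N, s N = u := by
  by_contra! hne
  have hlt : ∀ n, (s n).1.1 < u.1.1 := fun n =>
    (exists_add_eq_iff.mp (hub n)).resolve_left (hne n)
  let v : flatSubmodule := ⟨(u.1.1, u.1.2 - 1), fun h => absurd h (hlt 0).ne_bot⟩
  rcases exists_add_eq_iff.mp (hleast v fun n => exists_add_eq_iff.mpr (Or.inr (hlt n)))
    with huv | huv
  · have := congrArg (fun p : flatSubmodule => p.1.2) huv
    simp only [v] at this
    linarith
  · exact lt_irrefl _ huv

end flatSubmodule

def flatCone (α : ℝ≥0) (hα : α ≠ 0) : PCone where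
  carrier := flatSubmodule
  add := (· + ·)
  smul := (· • ·)
  zero := 0
  norm p := α * p.1.1
  add_comm := add_comm
  add_assoc := add_assoc
  zero_add := zero_add
  one_smul := one_smul ℝ≥0
  mul_smul := mul_smul
  smul_add := smul_add
  add_smul := add_smul
  smul_zero := smul_zero
  zero_smul := zero_smul ℝ≥0
  cancel _ _ _ := add_right_cancel
  positivity p q h := flatSubmodule.eq_zero_of_fst_eq_zero
    (add_eq_zero.mp (congrArg (fun r : flatSubmodule => r.1.1) h)).1
  norm_smul t p := by simp [mul_left_comm]
  norm_sep p h := flatSubmodule.eq_zero_of_fst_eq_zero ((mul_eq_zero.mp h).resolve_left hα)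
  norm_triangle p q := by simp [mul_add]
  norm_pos p q := by simp [mul_add]
  norm_omega s u _ hlub := by
    obtain ⟨N, rfl⟩ := flatSubmodule.exists_eq_of_isLub hlub.1 hlub.2
    have hle : ∀ n, α * (s n).1.1 ≤ α * (s N).1.1 := fun n => by
      rcases flatSubmodule.exists_add_eq_iff.mp (hlub.1 n) with h | h
      · rw [h]
      · gcongr
    exact le_antisymm (le_ciSup ⟨_, Set.forall_mem_range.mpr hle⟩ N) (ciSup_le hle)

def ray (P : PCone) (x : P.carrier) (p : flatSubmodule) : P.carrier := P.smul p.1.1 x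

lemma ray_fst_one (P : PCone) (x : P.carrier) :
    ray P x ⟨(1, 0), fun h => absurd h one_ne_zero⟩ = x :=
  P.one_smul x

lemma IsConeHom.comp_ray {P Q : PCone} {f : P.carrier → Q.carrier} (hf : IsConeHom P Q f)
    (x : P.carrier) : (fun p => f (ray P x p)) = ray Q (f x) :=
  funext fun p => hf.map_smul p.1.1 x

lemma isConeHom_ray_iff {α : ℝ≥0} (hα : α ≠ 0) {P : PCone} {x : P.carrier} :
    IsConeHom (flatCone α hα) P (ray P x) ↔ P.norm x ≤ α := by
  constructor
  · intro h
    have hunit : (flatCone α hα).norm ⟨(α⁻¹, 0), fun h => absurd h (inv_ne_zero hα)⟩ ≤ 1 := by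
      simp [flatCone, hα]
    have := h.bounded _ hunit
    rwa [ray, P.norm_smul, inv_mul_le_iff₀ (pos_of_ne_zero hα), mul_one] at this
  · intro hx
    refine IsConeHom.of_isLub_attained
      (fun s u hlub => flatSubmodule.exists_eq_of_isLub hlub.1 hlub.2)
      (fun p q => P.add_smul _ _ x) (fun t p => P.mul_smul _ _ x) (fun p hp => ?_)
    calc P.norm (ray P x p) = p.1.1 * P.norm x := P.norm_smul _ _
      _ ≤ α * p.1.1 := by rw [mul_comm]; gcongr
      _ ≤ 1 := hp

structure IsLimitCone {J : Type} [CategoryTheory.Category J] (D : J → PCone)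
    (Dmap : ∀ {i j : J}, (i ⟶ j) → (D i).carrier → (D j).carrier)
    (L : PCone) (g : ∀ i : J, L.carrier → (D i).carrier) : Prop where
  isConeHom_proj : ∀ i, IsConeHom L (D i) (g i)
  map_proj : ∀ {i j : J} (f : i ⟶ j) (x : L.carrier), Dmap f (g i x) = g j x
  existsUnique_lift : ∀ (A : PCone) (c : ∀ i : J, A.carrier → (D i).carrier),
    (∀ i, IsConeHom A (D i) (c i)) →
    (∀ {i j : J} (f : i ⟶ j) (a : A.carrier), Dmap f (c i a) = c j a) →
    ∃! h : A.carrier → L.carrier, IsConeHom A L h ∧ ∀ i a, g i (h a) = c i a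

namespace IsLimitCone

variable {J : Type} [CategoryTheory.Category J] {D : J → PCone}
  {Dmap : ∀ {i j : J}, (i ⟶ j) → (D i).carrier → (D j).carrier}
  {L : PCone} {g : ∀ i : J, L.carrier → (D i).carrier}

lemma eq_of_proj_eq (hL : IsLimitCone D Dmap L g) {x y : L.carrier} (hxy : ∀ i, g i x = g i y) :
    x = y := by
  have hα : L.norm x + L.norm y + 1 ≠ 0 := by positivity
  have hx : IsConeHom (flatCone _ hα) L (ray L x) :=
    (isConeHom_ray_iff hα).mpr (by rw [add_assoc]; exact le_self_add)
  have hy : IsConeHom (flatCone _ hα) L (ray L y) :=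
    (isConeHom_ray_iff hα).mpr (le_add_right le_add_self)
  have hrays : ray L x = ray L y :=
    (hL.existsUnique_lift _ (fun i p => g i (ray L x p))
      (fun i => hx.comp (hL.isConeHom_proj i)) (fun f p => hL.map_proj f _)).unique
      ⟨hx, fun _ _ => rfl⟩
      ⟨hy, fun i p => by simp only [ray, (hL.isConeHom_proj i).map_smul, hxy i]⟩
  simpa only [ray_fst_one] using congrFun hrays ⟨(1, 0), fun h => absurd h one_ne_zero⟩

lemma norm_eq_iSup_norm_proj (hL : IsLimitCone D Dmap L g) (x : L.carrier) :
    L.norm x = ⨆ i, (D i).norm (g i x) := by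
  have hbdd : BddAbove (Set.range fun i => (D i).norm (g i x)) :=
    ⟨L.norm x, Set.forall_mem_range.mpr fun i => (hL.isConeHom_proj i).norm_map_le x⟩
  refine le_antisymm (le_of_forall_gt_imp_ge_of_dense fun α hα => ?_)
    (ciSup_le' fun i => (hL.isConeHom_proj i).norm_map_le x)
  have hα0 : α ≠ 0 := (zero_le.trans_lt hα).ne'
  have hproj : ∀ i, IsConeHom (flatCone α hα0) (D i) (fun p => g i (ray L x p)) := fun i => by
    have hray := (isConeHom_ray_iff hα0).mpr ((le_ciSup hbdd i).trans hα.le)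
    rwa [← (hL.isConeHom_proj i).comp_ray x] at hray
  obtain ⟨h, ⟨hh, hgh⟩, -⟩ := hL.existsUnique_lift _ _ hproj (fun f p => hL.map_proj f _)
  have : h = ray L x := funext fun p => hL.eq_of_proj_eq fun i => hgh i p
  exact (isConeHom_ray_iff hα0).mp (this ▸ hh)

end IsLimitCone

theorem stmt_16_general {J : Type} [CategoryTheory.Category J]
    (D : J → PCone)
    (Dmap : ∀ {i j : J}, (i ⟶ j) → (D i).carrier → (D j).carrier)
    (L : PCone) (g : ∀ i : J, L.carrier → (D i).carrier)
    (hg : ∀ i, IsConeHom L (D i) (g i))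
    (hcompat : ∀ {i j : J} (f : i ⟶ j) (x : L.carrier), Dmap f (g i x) = g j x)
    (hlim : ∀ (A : PCone) (c : ∀ i : J, A.carrier → (D i).carrier),
      (∀ i, IsConeHom A (D i) (c i)) →
      (∀ {i j : J} (f : i ⟶ j) (a : A.carrier), Dmap f (c i a) = c j a) →
      ∃! h : A.carrier → L.carrier,
        IsConeHom A L h ∧ ∀ i a, g i (h a) = c i a) :
    (∀ x y : L.carrier, (∀ i, g i x = g i y) → x = y) ∧
    (∀ x : L.carrier, L.norm x = ⨆ i, (D i).norm (g i x)) := by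
  have hL : IsLimitCone D Dmap L g := ⟨hg, hcompat, hlim⟩
  exact ⟨fun _ _ => hL.eq_of_proj_eq, hL.norm_eq_iSup_norm_proj⟩

/-- Given a diagram `D` of cones indexed by a (small) category `J`, for a limit cone
`(L, g)` over `D`: (1) the projections `g_i` are jointly injective, and
(2) `‖x‖ = ⨆ i ‖g_i x‖` for every `x ∈ L`. -/
theorem stmt_16 {J : Type} [CategoryTheory.Category J]
    (D : J → PCone)
    (Dmap : ∀ {i j : J}, (i ⟶ j) → (D i).carrier → (D j).carrier)
    (hDmap : ∀ {i j : J} (f : i ⟶ j), IsConeHom (D i) (D j) (Dmap f))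
    (L : PCone) (g : ∀ i : J, L.carrier → (D i).carrier)
    (hg : ∀ i, IsConeHom L (D i) (g i))
    (hcompat : ∀ {i j : J} (f : i ⟶ j) (x : L.carrier), Dmap f (g i x) = g j x)
    (hlim : ∀ (A : PCone) (c : ∀ i : J, A.carrier → (D i).carrier),
      (∀ i, IsConeHom A (D i) (c i)) →
      (∀ {i j : J} (f : i ⟶ j) (a : A.carrier), Dmap f (c i a) = c j a) →
      ∃! h : A.carrier → L.carrier,
        IsConeHom A L h ∧ ∀ i a, g i (h a) = c i a) :
    (∀ x y : L.carrier, (∀ i, g i x = g i y) → x = y) ∧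
    (∀ x : L.carrier, L.norm x = ⨆ i, (D i).norm (g i x)) :=
  stmt_16_general D Dmap L g hg hcompat hlim
end
end
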